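/- arXiv:2302.10556 — 8 statements merged into one kernel-verified Lean document; each statement's English description precedes it below -/
import Mathlib

section
/- Let F be a finite field with q elements and let C be a linear code in F^n (an F-linear subspace of the space of functions Fin n → F). Then the covering radius of C is at most the external distance of C, i.e., ρ(C) ≤ s(C), where s(C) is the number of distinct nonzero Hamming weights occurring among codewords of the dual code C^⊥. -/
open scoped BigOperators

/-- The distance from a vector `v` to a code `C`. -/
noncomputable def distToCode {F : Type*} [DecidableEq F] {n : ℕ}
    (C : Set (Fin n → F)) (v : Fin n → F) : ℕ :=
  sInf {d | ∃ c ∈ C, hammingDist v c = d}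

/-- The covering radius of a code `C`: the maximum over all vectors of the
distance to the code. -/
noncomputable def coveringRadius {F : Type*} [DecidableEq F] {n : ℕ}
    (C : Set (Fin n → F)) : ℕ :=
  sSup {r | ∃ v : Fin n → F, distToCode C v = r}

/-- The dual code of a linear code `C`. -/
def dualCode {F : Type*} [Field F] {n : ℕ} (C : Submodule F (Fin n → F)) :
    Set (Fin n → F) :=
  {y | ∀ x ∈ C, ∑ i, x i * y i = 0}

/-- The external distance of a linear code `C`: the number of distinct nonzero
Hamming weights occurring among codewords of the dual code. -/
noncomputable def externalDistance {F : Type*} [Field F] [DecidableEq F] {n : ℕ}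
    (C : Submodule F (Fin n → F)) : ℕ :=
  Set.ncard {w : ℕ | w ≠ 0 ∧ ∃ y ∈ dualCode C, hammingNorm y = w}

/-!
Delsarte's argument. Let `f = ∏ (X - w)` over the nonzero weights `w` of `C^⊥`: a polynomial of
degree `s(C)` with `f(0) ≠ 0`. For a primitive additive character `ψ`, the transform
`g(z) = ∑ᵤ f(wt u) ψ(u ⬝ z)` vanishes as soon as `wt z > deg f`: `wt(u)^k` is a sum of products of
at most `k` coordinate indicators `[uᵢ ≠ 0]`, and each such product is killed by summing
`ψ(uᵢ zᵢ)` over a coordinate `i` it does not involve with `zᵢ ≠ 0`. On the other hand, orthogonality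
of characters on `C` gives `∑_{c ∈ C} g(c - v) = |C| ∑_{u ∈ C^⊥} f(wt u) ψ(-u ⬝ v) = |C| f(0) ≠ 0`,
so `wt(c - v) ≤ s(C)` for some `c ∈ C`.
-/

open Finset Polynomial

namespace AddChar

lemma map_sum_eq_prod {A M : Type*} [AddCommMonoid A] [CommMonoid M] (ψ : AddChar A M)
    {ι : Type*} (s : Finset ι) (g : ι → A) : ψ (∑ i ∈ s, g i) = ∏ i ∈ s, ψ (g i) := by
  induction s using Finset.cons_induction with
  | empty => simp
  | cons a s ha ih => rw [sum_cons, prod_cons, AddChar.map_add_eq_mul, ih]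

end AddChar

lemma hammingNorm_pow_eq_sum_prod {ι R K : Type*} [Fintype ι] [DecidableEq ι] [Zero R]
    [DecidableEq R] [CommSemiring K] (u : ι → R) (k : ℕ) :
    (hammingNorm u : K) ^ k =
      ∑ t : Fin k → ι, ∏ i, ∏ _j : {j // t j = i}, if u i = 0 then (0 : K) else 1 := by
  have hwt : (hammingNorm u : K) = ∑ i, if u i = 0 then (0 : K) else 1 := by
    simp [hammingNorm, card_filter, ite_not]
  simp_rw [hwt, Fintype.sum_pow, Fintype.prod_fiberwise']

section Fourier

variable {ι R K : Type*} [Fintype ι] [DecidableEq ι] [CommRing R] [Fintype R] [CommRing K]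

lemma sum_prod_mul_addChar_dotProduct (ψ : AddChar R K) (φ : ι → R → K) (z : ι → R) :
    ∑ u : ι → R, (∏ i, φ i (u i)) * ψ (u ⬝ᵥ z) = ∏ i, ∑ a, φ i a * ψ (a * z i) := by
  simp only [dotProduct, AddChar.map_sum_eq_prod, ← prod_mul_distrib]
  exact (Fintype.prod_sum fun i a => φ i a * ψ (a * z i)).symm

variable [DecidableEq R] [IsDomain K] {ψ : AddChar R K}

lemma sum_prod_mul_addChar_dotProduct_eq_zero (hψ : ψ.IsPrimitive) {φ : ι → R → K}
    {z : ι → R} {i₀ : ι} (hφ : ∀ a, φ i₀ a = 1) (hz : z i₀ ≠ 0) :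
    ∑ u : ι → R, (∏ i, φ i (u i)) * ψ (u ⬝ᵥ z) = 0 := by
  rw [sum_prod_mul_addChar_dotProduct]
  refine prod_eq_zero (mem_univ i₀) ?_
  simpa [hφ, hz] using AddChar.sum_mulShift (z i₀) hψ

lemma sum_hammingNorm_pow_mul_addChar_eq_zero (hψ : ψ.IsPrimitive) {z : ι → R} {k : ℕ}
    (hk : k < hammingNorm z) : ∑ u : ι → R, (hammingNorm u : K) ^ k * ψ (u ⬝ᵥ z) = 0 := by
  simp_rw [hammingNorm_pow_eq_sum_prod, sum_mul]
  rw [sum_comm]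
  refine sum_eq_zero fun t _ => ?_
  obtain ⟨i₀, hz, ht⟩ : ∃ i₀ ∈ ({i | z i ≠ 0} : Finset ι), i₀ ∉ univ.image t :=
    exists_mem_notMem_of_card_lt_card <| card_image_le.trans_lt <| by
      rwa [card_univ, Fintype.card_fin]
  refine sum_prod_mul_addChar_dotProduct_eq_zero hψ
    (φ := fun i a => ∏ _j : {j // t j = i}, if a = 0 then (0 : K) else 1) (i₀ := i₀)
    (fun a => Fintype.prod_eq_one _ fun j => absurd (j.2 ▸ mem_image_of_mem t (mem_univ j.1)) ht)
    (by simpa using hz)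

lemma sum_eval_hammingNorm_mul_addChar_eq_zero (hψ : ψ.IsPrimitive) (f : K[X]) {z : ι → R}
    (hf : f.natDegree < hammingNorm z) :
    ∑ u : ι → R, f.eval (hammingNorm u : K) * ψ (u ⬝ᵥ z) = 0 := by
  simp_rw [eval_eq_sum_range, sum_mul, mul_assoc]
  rw [sum_comm]
  refine sum_eq_zero fun k hk => ?_
  rw [← mul_sum, sum_hammingNorm_pow_mul_addChar_eq_zero hψ ((mem_range.1 hk).trans_le hf),
    mul_zero]

end Fourier

section Code

variable {F : Type*} [Field F] {n : ℕ} (C : Submodule F (Fin n → F))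

lemma sum_addChar_dotProduct_eq_zero_of_notMem_dualCode {K : Type*} [CommRing K] [IsDomain K]
    [Fintype C] {ψ : AddChar F K} (hψ : ψ.IsPrimitive) {u : Fin n → F} (hu : u ∉ dualCode C) :
    ∑ c : C, ψ (u ⬝ᵥ c) = 0 := by
  obtain ⟨x, hx, hxu⟩ : ∃ x ∈ C, x ⬝ᵥ u ≠ 0 := by simpa [dualCode, dotProduct] using hu
  obtain ⟨a, ha⟩ := AddChar.ne_one_iff.1 (hψ hxu)
  let χ : AddChar C K := ψ.compAddMonoidHom
    (AddMonoidHom.mk' (fun c : C => u ⬝ᵥ (c : Fin n → F)) fun c d => dotProduct_add u c d)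
  refine AddChar.sum_eq_zero_of_ne_one (ψ := χ) <|
    AddChar.ne_one_iff.2 ⟨⟨a • x, C.smul_mem a hx⟩, ?_⟩
  simpa [χ, dotProduct_comm u x, mul_comm] using ha

variable [Fintype F] [DecidableEq F]

lemma sum_code_sum_eval_hammingNorm_mul_addChar {K : Type*} [CommRing K] [IsDomain K]
    [Fintype C] {ψ : AddChar F K} (hψ : ψ.IsPrimitive) (f : K[X])
    (hf : ∀ u ∈ dualCode C, u ≠ 0 → f.eval (hammingNorm u : K) = 0) (v : Fin n → F) :
    ∑ c : C, ∑ u, f.eval (hammingNorm u : K) * ψ (u ⬝ᵥ ((c : Fin n → F) - v)) =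
      Fintype.card C * f.eval 0 := by
  have hsplit : ∀ (u : Fin n → F) (c : C),
      ψ (u ⬝ᵥ ((c : Fin n → F) - v)) = ψ (-(u ⬝ᵥ v)) * ψ (u ⬝ᵥ c) := by
    intro u c
    rw [dotProduct_sub, sub_eq_neg_add, AddChar.map_add_eq_mul]
  simp_rw [hsplit, ← mul_assoc]
  rw [sum_comm]
  simp_rw [← mul_sum]
  rw [Fintype.sum_eq_single 0]
  · simp [mul_comm]
  · intro u hu
    by_cases hdual : u ∈ dualCode C
    · rw [hf u hdual hu, zero_mul, zero_mul]
    · rw [sum_addChar_dotProduct_eq_zero_of_notMem_dualCode C hψ hdual, mul_zero]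

lemma exists_hammingDist_le_natDegree (f : ℂ[X]) (hf0 : f.eval 0 ≠ 0)
    (hf : ∀ u ∈ dualCode C, u ≠ 0 → f.eval (hammingNorm u : ℂ) = 0) (v : Fin n → F) :
    ∃ c ∈ C, hammingDist v c ≤ f.natDegree := by
  have := Fintype.ofFinite C
  have hψ := AddChar.FiniteField.primitiveChar_to_Complex_isPrimitive F
  have hsum := sum_code_sum_eval_hammingNorm_mul_addChar C hψ f hf v
  obtain ⟨c, -, hc⟩ := exists_ne_zero_of_sum_ne_zero <| hsum ▸
    mul_ne_zero (Nat.cast_ne_zero.2 Fintype.card_ne_zero) hf0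
  refine ⟨c, c.2, ?_⟩
  rw [hammingDist_eq_hammingNorm, neg_add_eq_sub]
  by_contra! h
  exact hc (sum_eval_hammingNorm_mul_addChar_eq_zero hψ f h)

lemma exists_hammingDist_le_externalDistance (v : Fin n → F) :
    ∃ c ∈ C, hammingDist v c ≤ externalDistance C := by
  have hfin : {w : ℕ | w ≠ 0 ∧ ∃ y ∈ dualCode C, hammingNorm y = w}.Finite :=
    (Set.finite_range (hammingNorm : (Fin n → F) → ℕ)).subset fun w ⟨_, y, _, hy⟩ => ⟨y, hy⟩
  let f : ℂ[X] := ∏ w ∈ hfin.toFinset, (X - Polynomial.C (w : ℂ))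
  have hdeg : f.natDegree = externalDistance C := by
    rw [natDegree_finsetProd_X_sub_C_eq_card, externalDistance, Set.ncard_eq_toFinset_card _ hfin]
  have hf0 : f.eval 0 ≠ 0 := by
    simp only [f, eval_prod, eval_sub, eval_X, eval_C, zero_sub, prod_ne_zero_iff, neg_ne_zero]
    exact fun w hw => Nat.cast_ne_zero.2 (hfin.mem_toFinset.1 hw).1
  have hf : ∀ u ∈ dualCode C, u ≠ 0 → f.eval (hammingNorm u : ℂ) = 0 := fun u hu hu0 => by
    rw [eval_prod]
    exact prod_eq_zero (hfin.mem_toFinset.2 ⟨hammingNorm_ne_zero_iff.2 hu0, u, hu, rfl⟩) (by simp)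
  simpa [hdeg] using exists_hammingDist_le_natDegree C f hf0 hf v

end Code

lemma coveringRadius_le_of_forall_exists_hammingDist_le {F : Type*} [DecidableEq F] {n r : ℕ}
    {C : Set (Fin n → F)} (h : ∀ v, ∃ c ∈ C, hammingDist v c ≤ r) : coveringRadius C ≤ r := by
  refine csSup_le' ?_
  rintro _ ⟨v, rfl⟩
  obtain ⟨c, hc, hvc⟩ := h v
  have hdist : distToCode C v ≤ hammingDist v c := Nat.sInf_le ⟨c, hc, rfl⟩
  exact hdist.trans hvc

theorem coveringRadius_le_externalDistance_general {F : Type*} [Field F] [Fintype F]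
    [DecidableEq F] {n : ℕ}
    (C : Submodule F (Fin n → F)) :
    coveringRadius (C : Set (Fin n → F)) ≤ externalDistance C :=
  coveringRadius_le_of_forall_exists_hammingDist_le (exists_hammingDist_le_externalDistance C)

/-- The covering radius of a linear code is at most its external distance. -/
theorem coveringRadius_le_externalDistance {F : Type*} [Field F] [Fintype F]
    [DecidableEq F] {q n : ℕ} (hq : Fintype.card F = q)
    (C : Submodule F (Fin n → F)) :
    coveringRadius (C : Set (Fin n → F)) ≤ externalDistance C :=
  coveringRadius_le_externalDistance_general C
end

section
/- Let F be a finite field with q elements and let C be a linear code in F^n with covering radius ρ. If C is completely regular, then C is uniformly packed in the wide sense: there exist rational numbers β_0, β_1, …, β_ρ such that for every v ∈ F^n, ∑_{k=0}^{ρ} β_k · |{c ∈ C : d(v,c) = k}| = 1. -/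
open scoped BigOperators

/-- `C` is completely regular: for every `l ≤ ρ` there are numbers `c_l`, `b_l`
such that every vector at distance `l` from `C` has exactly `c_l` neighbors at
distance `l - 1` from `C` and exactly `b_l` neighbors at distance `l + 1`
from `C` (neighbors at distance `l - 1` are described by
`distToCode C y + 1 = l`, so that for `l = 0` the set is empty). -/
def CompletelyRegular {F : Type*} [DecidableEq F] {n : ℕ}
    (C : Set (Fin n → F)) : Prop :=
  ∀ l ≤ coveringRadius C, ∃ cl bl : ℕ, ∀ x : Fin n → F, distToCode C x = l →
    Nat.card {y : Fin n → F | hammingDist x y = 1 ∧ distToCode C y + 1 = l} = cl ∧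
    Nat.card {y : Fin n → F | hammingDist x y = 1 ∧ distToCode C y = l + 1} = bl

/-- `C` is uniformly packed in the wide sense with respect to the radius `ρ`. -/
def UniformlyPacked {F : Type*} [DecidableEq F] {n : ℕ}
    (C : Set (Fin n → F)) (ρ : ℕ) : Prop :=
  ∃ β : ℕ → ℚ, ∀ v : Fin n → F,
    ∑ k ∈ Finset.range (ρ + 1),
      β k * (Nat.card {c : Fin n → F | c ∈ C ∧ hammingDist v c = k} : ℚ) = 1

/-!
Let `S_j(v)` be the number of walks of length `j` in the Hamming graph from `v` into `C`.
Complete regularity says that how the neighbours of `v` spread over the distance levels of `C`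
depends only on `d(v, C)`; by induction on `j`, so does `S_j(v)`. The Hamming graph is
distance-transitive, so the number of walks of length `j` between two words at distance `m` is a
number `ω_j(m)`, which vanishes for `j < m` and is positive for `j = m`. Hence
`S_j(v) = ∑ₘ Nₘ(v) ω_j(m)` with `Nₘ(v) = #{c ∈ C | d(v, c) = m}` is a triangular system, and
`Nₘ(v)` depends only on `d(v, C)` as well. The matrix `(N_k(v))` indexed by `l = d(v, C)` and `k`
is upper triangular with nonzero diagonal, so `∑ₖ βₖ N_k(v) = 1` can be solved for `β`.
-/

open Finset

theorem Nat.card_setOf_eq_card_filter {α : Type*} [Fintype α] (p : α → Prop) [DecidablePred p] :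
    Nat.card {x | p x} = #{x | p x} := by
  simp [Nat.card_eq_fintype_card, Fintype.card_subtype]

theorem Equiv.exists_apply_eq_and_apply_eq {α : Type*} [DecidableEq α] {a b a' b' : α}
    (h : a = b ↔ a' = b') : ∃ τ : α ≃ α, τ a = a' ∧ τ b = b' := by
  refine ⟨(swap a a').trans (swap (swap a a' b) b'), ?_, by simp⟩
  by_cases hab : a = b
  · subst hab
    simp [h.mp rfl]
  · have hne : swap a a' b ≠ a' := by simpa using (swap a a').injective.ne (Ne.symm hab)
    simp [swap_apply_of_ne_of_ne hne.symm (mt h.mpr hab)]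

theorem eq_of_forall_sum_mul_eq_of_triangular {D : Finset ℕ} {f : ℕ → ℕ → ℕ} {a b : ℕ → ℕ}
    (hf : ∀ j m, j < m → f j m = 0) (hf_pos : ∀ m ∈ D, 0 < f m m)
    (h : ∀ j, ∑ m ∈ D, a m * f j m = ∑ m ∈ D, b m * f j m) : ∀ m ∈ D, a m = b m := by
  intro m
  induction m using Nat.strong_induction_on with
  | _ m ih =>
  intro hm
  have hsplit (c : ℕ → ℕ) :
      ∑ i ∈ D, c i * f m i = ∑ i ∈ D with i < m, c i * f m i + c m * f m m := by
    rw [← sum_filter_add_sum_filter_not D (· < m)]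
    refine congrArg _ (sum_eq_single_of_mem m (by simp [hm]) fun i hi hne => ?_)
    rw [mem_filter] at hi
    rw [hf m i (by omega), mul_zero]
  have hlow : ∑ i ∈ D with i < m, a i * f m i = ∑ i ∈ D with i < m, b i * f m i :=
    sum_congr rfl fun i hi => by
      rw [mem_filter] at hi
      rw [ih i hi.2 hi.1]
  have hm_eq := h m
  rw [hsplit a, hsplit b, hlow] at hm_eq
  exact Nat.eq_of_mul_eq_mul_right (hf_pos m hm) (Nat.add_left_cancel hm_eq)

theorem exists_sum_mul_eq_one_of_triangular {K : Type*} [Field K] {ρ : ℕ} {A : ℕ → ℕ → K}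
    (hA : ∀ l k, k < l → A l k = 0) (hA_diag : ∀ l ≤ ρ, A l l ≠ 0) :
    ∃ β : ℕ → K, ∀ l ≤ ρ, ∑ k ∈ range (ρ + 1), β k * A l k = 1 := by
  let M : Matrix (Fin (ρ + 1)) (Fin (ρ + 1)) K := Matrix.of fun l k => A l k
  have hdet : IsUnit M.det := by
    rw [Matrix.det_of_isUpperTriangular (M := M) fun l k hkl => hA l k hkl, isUnit_iff_ne_zero,
      prod_ne_zero_iff]
    exact fun l _ => hA_diag l l.is_le
  let γ := M⁻¹.mulVec 1
  refine ⟨fun k => if hk : k < ρ + 1 then γ ⟨k, hk⟩ else 0, fun l hl => ?_⟩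
  have hγ : M.mulVec γ = 1 := by
    rw [Matrix.mulVec_mulVec, Matrix.mul_nonsing_inv M hdet, Matrix.one_mulVec]
  have := congr_fun hγ ⟨l, Nat.lt_succ_of_le hl⟩
  simpa [sum_range, Matrix.mulVec, dotProduct, M, mul_comm, Fin.is_le] using this

namespace HammingSpace

variable {ι F : Type*} [Fintype ι] [DecidableEq F]

theorem hammingDist_comp_equiv (π : ι ≃ ι) (x y : ι → F) :
    hammingDist (x ∘ π) (y ∘ π) = hammingDist x y :=
  card_equiv π (by simp)

theorem exists_isometry_apply_eq {u c u' c' : ι → F}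
    (h : hammingDist u c = hammingDist u' c') :
    ∃ σ : (ι → F) ≃ (ι → F),
      (∀ x y, hammingDist (σ x) (σ y) = hammingDist x y) ∧ σ u = u' ∧ σ c = c' := by
  have hcard : Fintype.card {i // u i ≠ c i} = Fintype.card {i // u' i ≠ c' i} := by
    rw [Fintype.card_subtype, Fintype.card_subtype]
    exact h
  set e := Fintype.equivOfCardEq hcard
  set π := e.extendSubtype
  have hπ : ∀ j, u j = c j ↔ u' (π j) = c' (π j) := by
    intro j
    by_cases hj : u j = c j
    · simpa [hj] using e.extendSubtype_not_mem j (not_not.mpr hj)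
    · simpa [hj] using e.extendSubtype_mem j hj
  choose τ hτ using fun i =>
    Equiv.exists_apply_eq_and_apply_eq (by simpa using hπ (π.symm i))
  refine ⟨(Equiv.arrowCongr π (Equiv.refl F)).trans (Equiv.piCongrRight τ), fun x y => ?_,
    funext fun i => (hτ i).1, funext fun i => (hτ i).2⟩
  exact (hammingDist_comp (fun i => τ i) (fun i => (τ i).injective)).trans
      (hammingDist_comp_equiv π.symm x y)

variable [DecidableEq ι]

theorem exists_hammingDist_eq_one_and_add_one_eq {u c : ι → F} (h : u ≠ c) :
    ∃ y, hammingDist u y = 1 ∧ hammingDist y c + 1 = hammingDist u c := by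
  obtain ⟨i, hi⟩ := Function.ne_iff.mp h
  refine ⟨Function.update u i (c i), ?_, ?_⟩
  · have : ({j | u j ≠ Function.update u i (c i) j} : Finset ι) = {i} := by
      ext j
      by_cases hj : j = i <;> simp [hj, hi]
    rw [hammingDist, this, card_singleton]
  · have : ({j | Function.update u i (c i) j ≠ c j} : Finset ι) =
        ({j | u j ≠ c j} : Finset ι).erase i := by
      ext j
      by_cases hj : j = i <;> simp [hj]
    rw [hammingDist, hammingDist, this, card_erase_add_one (by simp [hi])]

variable [Fintype F]

def walkCount : ℕ → (ι → F) → (ι → F) → ℕ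
  | 0, u, c => if u = c then 1 else 0
  | j + 1, u, c => ∑ y with hammingDist u y = 1, walkCount j y c

theorem walkCount_map_isometry (σ : (ι → F) ≃ (ι → F))
    (hσ : ∀ x y, hammingDist (σ x) (σ y) = hammingDist x y) (j : ℕ) (u c : ι → F) :
    walkCount j (σ u) (σ c) = walkCount j u c := by
  induction j generalizing u with
  | zero => simp [walkCount]
  | succ j ih =>
    refine sum_nbij' σ.symm σ (fun y hy => ?_) (fun y hy => ?_) (by simp) (by simp) fun y _ => ?_
    · simpa [← hσ u] using hy
    · simpa [hσ] using hy
    · simpa using ih (σ.symm y)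

theorem walkCount_eq_of_hammingDist_eq {u c u' c' : ι → F}
    (h : hammingDist u c = hammingDist u' c') (j : ℕ) : walkCount j u c = walkCount j u' c' := by
  obtain ⟨σ, hσ, rfl, rfl⟩ := exists_isometry_apply_eq h
  exact (walkCount_map_isometry σ hσ j u c).symm

theorem walkCount_eq_zero_of_lt {j : ℕ} {u c : ι → F} (h : j < hammingDist u c) :
    walkCount j u c = 0 := by
  induction j generalizing u with
  | zero => simp_all [walkCount, hammingDist_pos]
  | succ j ih =>
    refine sum_eq_zero fun y hy => ih ?_
    have := hammingDist_triangle u y c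
    simp only [mem_filter] at hy
    omega

theorem walkCount_pos {j : ℕ} {u c : ι → F} (h : hammingDist u c = j) :
    0 < walkCount j u c := by
  induction j generalizing u with
  | zero => simp [walkCount, hammingDist_eq_zero.mp h]
  | succ j ih =>
    obtain ⟨y, hy, hyc⟩ :=
      exists_hammingDist_eq_one_and_add_one_eq (u := u) (c := c) (hammingDist_pos.mp (by omega))
    exact (ih (u := y) (by omega)).trans_le <|
      single_le_sum (f := fun z => walkCount j z c) (fun _ _ => Nat.zero_le _) (by simpa using hy)

theorem card_neighbors_eq (v v' : ι → F) :
    #{y | hammingDist v y = 1} = #{y | hammingDist v' y = 1} := by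
  obtain ⟨σ, hσ, hv, -⟩ :=
    exists_isometry_apply_eq (by simp : hammingDist v v = hammingDist v' v')
  exact card_equiv σ fun y => by simp [← hv, hσ]

end HammingSpace

section DistToCode

variable {F : Type*} [DecidableEq F] {n : ℕ} {C : Set (Fin n → F)}

theorem distToCode_le {c : Fin n → F} (hc : c ∈ C) (v : Fin n → F) :
    distToCode C v ≤ hammingDist v c :=
  Nat.sInf_le ⟨c, hc, rfl⟩

theorem exists_hammingDist_eq_distToCode (hC : C.Nonempty) (v : Fin n → F) :
    ∃ c ∈ C, hammingDist v c = distToCode C v := by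
  obtain ⟨c, hc⟩ := hC
  exact Nat.sInf_mem (s := {d | ∃ c ∈ C, hammingDist v c = d}) ⟨_, c, hc, rfl⟩

theorem distToCode_eq_zero_iff (hC : C.Nonempty) {v : Fin n → F} :
    distToCode C v = 0 ↔ v ∈ C := by
  refine ⟨fun h => ?_, fun hv => by simpa using distToCode_le hv v⟩
  obtain ⟨c, hc, hvc⟩ := exists_hammingDist_eq_distToCode hC v
  rwa [hammingDist_eq_zero.mp (hvc.trans h)]

theorem distToCode_le_add (hC : C.Nonempty) (x y : Fin n → F) :
    distToCode C y ≤ distToCode C x + hammingDist x y := by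
  obtain ⟨c, hc, hxc⟩ := exists_hammingDist_eq_distToCode hC x
  calc distToCode C y ≤ hammingDist y c := distToCode_le hc y
    _ ≤ hammingDist y x + hammingDist x c := hammingDist_triangle _ _ _
    _ = distToCode C x + hammingDist x y := by rw [hxc, hammingDist_comm, add_comm]

theorem natCard_hammingDist_eq_zero_of_lt {v : Fin n → F} {k : ℕ} (hk : k < distToCode C v) :
    Nat.card {c | c ∈ C ∧ hammingDist v c = k} = 0 := by
  have : IsEmpty {c | c ∈ C ∧ hammingDist v c = k} :=
    ⟨fun ⟨c, hc, hvc⟩ => (distToCode_le hc v).not_gt (hvc ▸ hk)⟩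
  exact Nat.card_of_isEmpty

variable [Fintype F]

theorem distToCode_le_coveringRadius (v : Fin n → F) : distToCode C v ≤ coveringRadius C :=
  le_csSup (Set.finite_range _).bddAbove ⟨v, rfl⟩

theorem natCard_hammingDist_distToCode_pos (hC : C.Nonempty) (v : Fin n → F) :
    0 < Nat.card {c | c ∈ C ∧ hammingDist v c = distToCode C v} := by
  obtain ⟨c, hc, hvc⟩ := exists_hammingDist_eq_distToCode hC v
  have : Nonempty {c | c ∈ C ∧ hammingDist v c = distToCode C v} := ⟨⟨c, hc, hvc⟩⟩
  exact Nat.card_pos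

theorem card_neighbors_distToCode_eq_zero (hC : C.Nonempty) {v : Fin n → F} {m : ℕ}
    (hm : m + 1 < distToCode C v ∨ distToCode C v + 1 < m) :
    #{y | hammingDist v y = 1 ∧ distToCode C y = m} = 0 := by
  refine card_eq_zero.mpr (filter_eq_empty_iff.mpr fun y _ ⟨hvy, hym⟩ => ?_)
  have := distToCode_le_add hC v y
  have := distToCode_le_add hC y v
  rw [hammingDist_comm] at this
  omega

theorem card_neighbors_distToCode_add (hC : C.Nonempty) (v : Fin n → F) :
    #{y | hammingDist v y = 1 ∧ distToCode C y = distToCode C v} +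
      (#{y | hammingDist v y = 1 ∧ distToCode C y + 1 = distToCode C v} +
        #{y | hammingDist v y = 1 ∧ distToCode C y = distToCode C v + 1}) =
      #{y | hammingDist v y = 1} := by
  rw [← card_union_of_disjoint (disjoint_filter.mpr fun _ _ h h' => by omega), ← filter_or,
    ← card_union_of_disjoint (disjoint_filter.mpr fun _ _ h h' => by omega), ← filter_or]
  congr 1
  refine filter_congr fun y _ => ?_
  have := distToCode_le_add hC v y
  have := distToCode_le_add hC y v
  rw [hammingDist_comm] at this
  omega

end DistToCode

namespace CompletelyRegular

open HammingSpace

variable {F : Type*} [Fintype F] [DecidableEq F] {n : ℕ} {C : Set (Fin n → F)}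

theorem card_neighbors_distToCode_eq (hCR : CompletelyRegular C) (hC : C.Nonempty)
    {v v' : Fin n → F} (h : distToCode C v = distToCode C v') (m : ℕ) :
    #{y | hammingDist v y = 1 ∧ distToCode C y = m} =
      #{y | hammingDist v' y = 1 ∧ distToCode C y = m} := by
  obtain ⟨cl, bl, hcb⟩ := hCR _ (distToCode_le_coveringRadius v)
  have hdown (w : Fin n → F) (hw : distToCode C w = distToCode C v) :
      #{y | hammingDist w y = 1 ∧ distToCode C y + 1 = distToCode C w} = cl := by
    rw [← Nat.card_setOf_eq_card_filter, hw]
    exact (hcb w hw).1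
  have hup (w : Fin n → F) (hw : distToCode C w = distToCode C v) :
      #{y | hammingDist w y = 1 ∧ distToCode C y = distToCode C w + 1} = bl := by
    rw [← Nat.card_setOf_eq_card_filter, hw]
    exact (hcb w hw).2
  by_cases hfar : m + 1 < distToCode C v ∨ distToCode C v + 1 < m
  · rw [card_neighbors_distToCode_eq_zero hC hfar,
      card_neighbors_distToCode_eq_zero hC (h ▸ hfar)]
  obtain hm | rfl | rfl :
      m + 1 = distToCode C v ∨ m = distToCode C v ∨ m = distToCode C v + 1 := by
    omega
  · have hdown' (w : Fin n → F) (hw : distToCode C w = distToCode C v) :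
        #{y | hammingDist w y = 1 ∧ distToCode C y = m} = cl := by
      rw [← hdown w hw]
      congr 1
      exact filter_congr fun y _ => by omega
    rw [hdown' v rfl, hdown' v' h.symm]
  · have hsame (w : Fin n → F) (hw : distToCode C w = distToCode C v) :
        #{y | hammingDist w y = 1 ∧ distToCode C y = distToCode C v} + (cl + bl) =
          #{y | hammingDist w y = 1} := by
      rw [← hdown w hw, ← hup w hw, ← hw]
      exact card_neighbors_distToCode_add hC w
    have := hsame v rfl
    have := hsame v' h.symm
    have := card_neighbors_eq v v'
    omega
  · rw [hup v rfl, h, hup v' h.symm]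

theorem sum_neighbors_comp_distToCode_eq {M : Type*} [AddCommMonoid M]
    (hCR : CompletelyRegular C) (hC : C.Nonempty) {v v' : Fin n → F}
    (h : distToCode C v = distToCode C v') (G : ℕ → M) :
    ∑ y with hammingDist v y = 1, G (distToCode C y) =
      ∑ y with hammingDist v' y = 1, G (distToCode C y) := by
  rw [← sum_fiberwise_of_maps_to' (t := univ.image (distToCode C)) (by simp),
    ← sum_fiberwise_of_maps_to' (t := univ.image (distToCode C)) (by simp)]
  refine sum_congr rfl fun m _ => ?_
  rw [sum_const, sum_const, filter_filter, filter_filter, card_neighbors_distToCode_eq hCR hC h m]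

theorem sum_walkCount_eq [DecidablePred (· ∈ C)] (hCR : CompletelyRegular C) (hC : C.Nonempty)
    (j : ℕ) {v v' : Fin n → F} (h : distToCode C v = distToCode C v') :
    ∑ c with c ∈ C, walkCount j v c = ∑ c with c ∈ C, walkCount j v' c := by
  induction j generalizing v v' with
  | zero =>
    have hmem : v ∈ C ↔ v' ∈ C := by
      rw [← distToCode_eq_zero_iff hC, h, distToCode_eq_zero_iff hC]
    simp [walkCount, hmem]
  | succ j ih =>
    let S (y : Fin n → F) := ∑ c with c ∈ C, walkCount j y c
    have hS (y : Fin n → F) : S y = Function.extend (distToCode C) S 0 (distToCode C y) :=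
      (Function.FactorsThrough.extend_apply (f := distToCode C) (g := S)
        (fun _ _ hyy => ih hyy) 0 y).symm
    simp only [walkCount]
    rw [sum_comm, sum_comm (s := {c | c ∈ C}), sum_congr rfl fun y _ => hS y,
      sum_congr rfl fun y _ => hS y]
    exact sum_neighbors_comp_distToCode_eq hCR hC h _

theorem natCard_hammingDist_eq (hCR : CompletelyRegular C) (hC : C.Nonempty)
    {v v' : Fin n → F} (h : distToCode C v = distToCode C v') (k : ℕ) :
    Nat.card {c | c ∈ C ∧ hammingDist v c = k} =
      Nat.card {c | c ∈ C ∧ hammingDist v' c = k} := by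
  classical
  let dist (p : (Fin n → F) × (Fin n → F)) := hammingDist p.1 p.2
  -- `ω j m` counts the walks of length `j` between two words at distance `m`.
  let ω (j : ℕ) := Function.extend dist (fun p => walkCount j p.1 p.2) 0
  have hω (j : ℕ) (u c : Fin n → F) : walkCount j u c = ω j (hammingDist u c) :=
    (Function.FactorsThrough.extend_apply (f := dist)
      (fun _ _ hpq => walkCount_eq_of_hammingDist_eq hpq j) 0 (u, c)).symm
  let D := univ.image dist
  have hsum (w : Fin n → F) (j : ℕ) : ∑ c with c ∈ C, walkCount j w c =
      ∑ m ∈ D, #{c | c ∈ C ∧ hammingDist w c = m} * ω j m := by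
    simp_rw [hω, ← sum_fiberwise_of_maps_to' (g := hammingDist w) (t := D)
      (fun c _ => mem_image_of_mem dist (mem_univ (w, c))), sum_const, filter_filter, smul_eq_mul]
  have hω_lt (j m : ℕ) (hjm : j < m) : ω j m = 0 := by
    by_cases hm : ∃ p, dist p = m
    · obtain ⟨⟨u, c⟩, rfl⟩ := hm
      rw [← hω]
      exact walkCount_eq_zero_of_lt hjm
    · exact Function.extend_apply' _ _ _ hm
  have hω_pos (m : ℕ) (hm : m ∈ D) : 0 < ω m m := by
    obtain ⟨⟨u, c⟩, -, rfl⟩ := mem_image.mp hm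
    rw [← hω]
    exact walkCount_pos rfl
  rw [Nat.card_setOf_eq_card_filter, Nat.card_setOf_eq_card_filter]
  by_cases hk : k ∈ D
  · refine eq_of_forall_sum_mul_eq_of_triangular
      (a := fun m => #{c | c ∈ C ∧ hammingDist v c = m})
      (b := fun m => #{c | c ∈ C ∧ hammingDist v' c = m}) hω_lt hω_pos (fun j => ?_) k hk
    rw [← hsum, ← hsum, sum_walkCount_eq hCR hC j h]
  · have hempty (w : Fin n → F) : #{c | c ∈ C ∧ hammingDist w c = k} = 0 :=
      card_eq_zero.mpr <| filter_eq_empty_iff.mpr fun c _ hc =>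
        hk (mem_image.mpr ⟨(w, c), mem_univ _, hc.2⟩)
    rw [hempty, hempty]

theorem uniformlyPacked (hCR : CompletelyRegular C) (hC : C.Nonempty) :
    UniformlyPacked C (coveringRadius C) := by
  let N (v : Fin n → F) (k : ℕ) : ℚ := Nat.card {c | c ∈ C ∧ hammingDist v c = k}
  -- Levels that are not attained get an identity row, keeping the diagonal nonzero.
  let A (l k : ℕ) : ℚ :=
    Function.extend (distToCode C) (N · k) (fun l => if l = k then 1 else 0) l
  have hA (v : Fin n → F) (k : ℕ) : A (distToCode C v) k = N v k :=
    Function.FactorsThrough.extend_apply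
      (fun _ _ h => by simp only [N, natCard_hammingDist_eq hCR hC h]) _ v
  have hA_lt (l k : ℕ) (hkl : k < l) : A l k = 0 := by
    by_cases hl : ∃ v, distToCode C v = l
    · obtain ⟨v, rfl⟩ := hl
      simp only [hA, N, natCard_hammingDist_eq_zero_of_lt hkl, Nat.cast_zero]
    · simp [A, Function.extend_apply' _ _ _ hl, hkl.ne']
  have hA_diag (l : ℕ) : A l l ≠ 0 := by
    by_cases hl : ∃ v, distToCode C v = l
    · obtain ⟨v, rfl⟩ := hl
      rw [hA]
      exact Nat.cast_ne_zero.mpr (natCard_hammingDist_distToCode_pos hC v).ne'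
    · simp [A, Function.extend_apply' _ _ _ hl]
  obtain ⟨β, hβ⟩ := exists_sum_mul_eq_one_of_triangular hA_lt fun l _ => hA_diag l
  exact ⟨β, fun v => by simpa only [hA, N] using hβ _ (distToCode_le_coveringRadius (C := C) v)⟩

end CompletelyRegular

theorem completelyRegular_uniformlyPacked_general
    {F : Type*} [Field F] [Fintype F] [DecidableEq F] {n : ℕ}
    (C : Submodule F (Fin n → F))
    (hCR : CompletelyRegular (C : Set (Fin n → F))) :
    UniformlyPacked (C : Set (Fin n → F)) (coveringRadius (C : Set (Fin n → F))) :=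
  hCR.uniformlyPacked ⟨0, C.zero_mem⟩

/-- A completely regular linear code is uniformly packed in the wide sense. -/
theorem completelyRegular_uniformlyPacked
    {F : Type*} [Field F] [Fintype F] [DecidableEq F] {q n : ℕ}
    (hq : Fintype.card F = q) (C : Submodule F (Fin n → F))
    (hCR : CompletelyRegular (C : Set (Fin n → F))) :
    UniformlyPacked (C : Set (Fin n → F)) (coveringRadius (C : Set (Fin n → F))) :=
  completelyRegular_uniformlyPacked_general C hCR
end

section
/- Let q be a prime power and let ℓ, h be positive natural numbers. Then there exists a difference matrix D(q^ℓ, q^h) over the additive group F_q^ℓ, that is, a function D : Fin(q^{ℓ+h}) → Fin(q^{ℓ+h}) → F_q^ℓ such that for any two distinct row indices i ≠ j and every element v ∈ F_q^ℓ, the number of column indices k with D i k − D j k = v equals q^h. -/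
/-!
Let `K` be the extension of `F` of degree `ℓ + h` and `π : K → F^ℓ` a surjective `F`-linear map.
The matrix `D x y = π (x * y)`, indexed by `K × K`, is a difference matrix: for `x ≠ x'` the map
`y ↦ (x - x') * y` is a bijection of `K`, so `D x - D x'` takes each value `v` as often as `π`
does, namely `|ker π| = q^(ℓ+h) / q^ℓ = q^h` times.
-/

open Function

def IsDifferenceMatrix {ι κ G : Type*} [AddGroup G] (D : ι → κ → G) (μ : ℕ) : Prop :=
  ∀ i j, i ≠ j → ∀ v, Nat.card {k | D i k - D j k = v} = μ

namespace IsDifferenceMatrix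

variable {ι ι' κ κ' G : Type*} [AddGroup G] {D : ι → κ → G} {μ : ℕ}

theorem of_subsingleton [Subsingleton ι] (D : ι → κ → G) (μ : ℕ) : IsDifferenceMatrix D μ :=
  fun i j hij _ => (hij (Subsingleton.elim i j)).elim

theorem reindex (hD : IsDifferenceMatrix D μ) (e : ι' ≃ ι) (e' : κ' ≃ κ) :
    IsDifferenceMatrix (fun i k => D (e i) (e' k)) μ := fun _ _ hij v =>
  (Nat.card_congr (e'.subtypeEquiv fun _ => Iff.rfl)).trans (hD _ _ (e.injective.ne hij) v)

end IsDifferenceMatrix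

theorem AddMonoidHom.card_ker_mul_card_of_surjective {G H : Type*} [AddGroup G] [AddGroup H]
    {f : G →+ H} (hf : Surjective f) : Nat.card f.ker * Nat.card H = Nat.card G := by
  rw [← f.ker.card_mul_index, AddSubgroup.index_ker, f.range_eq_top.2 hf, AddSubgroup.card_top]

theorem isDifferenceMatrix_mul {K G : Type*} [DivisionRing K] [AddGroup G] {π : K →+ G}
    (hπ : Surjective π) : IsDifferenceMatrix (fun x y => π (x * y)) (Nat.card π.ker) := by
  intro x x' hxx' v
  calc Nat.card {y | π (x * y) - π (x' * y) = v}
      = Nat.card (π ⁻¹' {v}) :=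
        Nat.card_congr <| (Equiv.mulLeft₀ _ (sub_ne_zero.2 hxx')).subtypeEquiv fun y => by
          simp [sub_mul]
    _ = Nat.card π.ker := Nat.card_congr (π.fiberEquivKerOfSurjective hπ v)

theorem FiniteField.exists_isDifferenceMatrix (F : Type*) [Field F] [Finite F] (ℓ h : ℕ)
    [NeZero (ℓ + h)] : ∃ D : Fin (Nat.card F ^ (ℓ + h)) → Fin (Nat.card F ^ (ℓ + h)) → (Fin ℓ → F),
      IsDifferenceMatrix D (Nat.card F ^ h) := by
  obtain ⟨p, _⟩ := CharP.exists F
  have : Fact p.Prime := ⟨CharP.char_is_prime F p⟩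
  let K := Extension F p (ℓ + h)
  let b := Module.finBasisOfFinrankEq F K (finrank_extension F p (ℓ + h))
  let π : K →ₗ[F] Fin ℓ → F := (LinearMap.funLeft F F (Fin.castAdd h)).comp b.equivFun.toLinearMap
  have hπ : Surjective π :=
    (LinearMap.funLeft_surjective_of_injective F F _ (Fin.castAdd_injective ℓ h)).comp
      b.equivFun.surjective
  have hK : Nat.card K = Nat.card F ^ (ℓ + h) := natCard_extension F p (ℓ + h)
  have hker : Nat.card π.toAddMonoidHom.ker = Nat.card F ^ h := by
    have := AddMonoidHom.card_ker_mul_card_of_surjective (f := π.toAddMonoidHom) hπ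
    rw [Nat.card_fun, Nat.card_fin, hK, pow_add, mul_comm (Nat.card F ^ ℓ)] at this
    exact Nat.eq_of_mul_eq_mul_right (pow_pos Nat.card_pos ℓ) this
  let e := (Finite.equivFinOfCardEq hK).symm
  exact ⟨_, hker ▸ (isDifferenceMatrix_mul (π := π.toAddMonoidHom) hπ).reindex e e⟩

theorem exists_difference_matrix_general {q ℓ h : ℕ}
    (F : Type*) [Field F] [Fintype F]
    (hq : Fintype.card F = q) :
    ∃ D : Fin (q ^ (ℓ + h)) → Fin (q ^ (ℓ + h)) → (Fin ℓ → F),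
      ∀ i j : Fin (q ^ (ℓ + h)), i ≠ j → ∀ v : Fin ℓ → F,
        Nat.card {k : Fin (q ^ (ℓ + h)) | D i k - D j k = v} = q ^ h := by
  rw [Fintype.card_eq_nat_card] at hq
  subst hq
  rcases eq_or_ne (ℓ + h) 0 with h0 | h0
  · obtain ⟨rfl, rfl⟩ : ℓ = 0 ∧ h = 0 := by omega
    have : Subsingleton (Fin (Nat.card F ^ (0 + 0))) := Fin.subsingleton_iff_le_one.2 (by simp)
    exact ⟨0, IsDifferenceMatrix.of_subsingleton _ _⟩
  · have : NeZero (ℓ + h) := ⟨h0⟩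
    exact FiniteField.exists_isDifferenceMatrix F ℓ h

/-- For any prime power `q` (encoded by a finite field `F` with `q` elements)
and positive naturals `ℓ`, `h`, there exists a difference matrix
`D(q^ℓ, q^h)` over the additive group `F^ℓ`: a square matrix of order
`q^(ℓ+h)` with entries in `Fin ℓ → F` such that the componentwise difference
of any two distinct rows contains every element exactly `q^h` times. -/
theorem exists_difference_matrix {q ℓ h : ℕ} (hℓ : 1 ≤ ℓ) (hh : 1 ≤ h)
    (F : Type*) [Field F] [Fintype F] [DecidableEq F]
    (hq : Fintype.card F = q) :
    ∃ D : Fin (q ^ (ℓ + h)) → Fin (q ^ (ℓ + h)) → (Fin ℓ → F),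
      ∀ i j : Fin (q ^ (ℓ + h)), i ≠ j → ∀ v : Fin ℓ → F,
        Nat.card {k : Fin (q ^ (ℓ + h)) | D i k - D j k = v} = q ^ h :=
  exists_difference_matrix_general F hq
end

section
/- Let F be a finite field with q elements, let K be a field that is a finite-dimensional F-algebra with dim_F K = ℓ + h (ℓ, h ≥ 1), and let φ : K → F^ℓ be a surjective F-linear map. Then the multiplication table of K truncated by φ is a difference matrix D(q^ℓ, q^h): for any two distinct elements a ≠ b of K and every v ∈ F^ℓ, the number of elements c ∈ K with φ(a·c) − φ(b·c) = v equals q^h. -/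
/-!
Since `φ (a * c) - φ (b * c) = φ ((a - b) * c)` and multiplication by `a - b ≠ 0` is a bijection
of `K`, the count is the size of a fibre of the surjective `F`-linear map `c ↦ φ ((a - b) * c)`
from `K` onto `F^ℓ`. Every such fibre is a translate of the kernel, which has dimension
`(ℓ + h) - ℓ = h` and hence `q ^ h` elements.
-/

open Module

theorem AddMonoidHom.natCard_fiber_eq_natCard_ker {G H : Type*} [AddGroup G] [AddGroup H]
    (f : G →+ H) (x₀ : G) : Nat.card {x | f x = f x₀} = Nat.card f.ker :=
  Nat.card_congr <| ((Equiv.addLeft x₀).subtypeEquiv fun x => by simp).symm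

theorem LinearMap.natCard_fiber_of_surjective {K V W : Type*} [Field K] [AddCommGroup V]
    [Module K V] [FiniteDimensional K V] [AddCommGroup W] [Module K W] (f : V →ₗ[K] W)
    (hf : Function.Surjective f) (w : W) :
    Nat.card {x | f x = w} = Nat.card K ^ (finrank K V - finrank K W) := by
  obtain ⟨x₀, rfl⟩ := hf w
  have rank_nullity := f.finrank_range_add_finrank_ker
  rw [LinearMap.range_eq_top.2 hf, finrank_top] at rank_nullity
  rw [← Nat.eq_sub_of_add_eq' rank_nullity, ← natCard_eq_pow_finrank]
  exact f.toAddMonoidHom.natCard_fiber_eq_natCard_ker x₀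

theorem mul_table_truncation_difference_matrix_general
    {F : Type*} [Field F] [Fintype F] {q ℓ h : ℕ}
    (hq : Fintype.card F = q)
    (K : Type*) [Field K] [Algebra F K] [FiniteDimensional F K]
    (hdim : Module.finrank F K = ℓ + h)
    (φ : K →ₗ[F] (Fin ℓ → F)) (hφ : Function.Surjective φ) :
    ∀ a b : K, a ≠ b → ∀ v : Fin ℓ → F,
      Nat.card {c : K | φ (a * c) - φ (b * c) = v} = q ^ h := by
  intro a b hab v
  have hsurj : Function.Surjective (φ.comp (LinearMap.mulLeft F (a - b))) :=
    hφ.comp (mulLeft_bijective₀ _ (sub_ne_zero.2 hab)).surjective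
  have hfiber : {c : K | φ (a * c) - φ (b * c) = v} =
      {c | φ.comp (LinearMap.mulLeft F (a - b)) c = v} := by
    ext c
    simp [sub_mul]
  rw [hfiber, LinearMap.natCard_fiber_of_surjective _ hsurj, hdim, finrank_fin_fun,
    Nat.card_eq_fintype_card, hq, Nat.add_sub_cancel_left]

/-- Let `F` be a finite field with `q` elements, `K` a field extension of `F`
of dimension `ℓ + h`, and `φ : K → F^ℓ` a surjective `F`-linear map.  Then the
multiplication table of `K` truncated by `φ` is a difference matrix
`D(q^ℓ, q^h)`: for distinct `a ≠ b` in `K` and every `v ∈ F^ℓ`, exactly `q^h`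
elements `c ∈ K` satisfy `φ (a*c) - φ (b*c) = v`. -/
theorem mul_table_truncation_difference_matrix
    {F : Type*} [Field F] [Fintype F] [DecidableEq F] {q ℓ h : ℕ}
    (hq : Fintype.card F = q) (hℓ : 1 ≤ ℓ) (hh : 1 ≤ h)
    (K : Type*) [Field K] [Algebra F K] [FiniteDimensional F K]
    (hdim : Module.finrank F K = ℓ + h)
    (φ : K →ₗ[F] (Fin ℓ → F)) (hφ : Function.Surjective φ) :
    ∀ a b : K, a ≠ b → ∀ v : Fin ℓ → F,
      Nat.card {c : K | φ (a * c) - φ (b * c) = v} = q ^ h :=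
  mul_table_truncation_difference_matrix_general hq K hdim φ hφ
end

section
/- Let p be a prime, q = p^m, and let F be a finite field with q elements. Let C be a linear code in F^n that is projective (every nonzero codeword of the dual code C^⊥ has Hamming weight at least 3) and two-weight with weights w and n: every nonzero codeword of C has Hamming weight w or n, both values w < n are attained. Then there exist integers u ≥ 0 and h ≥ 1 such that w = h·p^u and n = (h+1)·p^u. -/
/-!
Let `x ∈ C` have full weight `n`, fix a coordinate `i₀` and let `D = {c ∈ C | c i₀ = 0}`; every
nonzero word of `D` has weight `w`. For `0 ≠ y ∈ D` the words `y - a • x` are nonzero, so the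
fibres of `i ↦ y i / x i` have size `0` or `d = n - w`, whence `n = k d`. Projectivity makes
every coordinate `j ≠ i₀` nonzero on `D`, so it takes each value equally often there, and double
counting the weights of `D`, with `|D| = q ^ (a + 1)`, gives
`(q ^ (a + 1) - 1) w = (q - 1) q ^ a (n - 1)`. With `w = (k - 1) d` this rearranges to
`(q - 1) q ^ a = d ((q ^ a - 1) (q - k) + q - 1)`, and as `q - 1 ∣ q ^ a - 1` it says
`d ∣ q ^ a`: `d` is a power of `p`.
-/

open scoped BigOperators

open Finset

theorem LinearMap.card_ker_mul_card_of_surjective {R V W : Type*} [Ring R] [AddCommGroup V]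
    [Module R V] [AddCommGroup W] [Module R W] {f : V →ₗ[R] W} (hf : Function.Surjective f) :
    Nat.card (LinearMap.ker f) * Nat.card W = Nat.card V := by
  rw [Submodule.card_eq_card_quotient_mul_card (LinearMap.ker f),
    Nat.card_congr (f.quotKerEquivOfSurjective hf).toEquiv, mul_comm]

theorem Module.exists_card_eq_pow_succ (F V : Type*) [Field F] [Fintype F] [AddCommGroup V]
    [Module F V] [Fintype V] [Nontrivial V] : ∃ a, Fintype.card V = Fintype.card F ^ (a + 1) :=
  ⟨finrank F V - 1, by rw [card_eq_pow_finrank (K := F), Nat.sub_add_cancel finrank_pos]⟩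

theorem LinearMap.card_filter_ne_zero_mul_card {F V : Type*} [Field F] [Fintype F]
    [DecidableEq F] [AddCommGroup V] [Module F V] [Fintype V] {f : V →ₗ[F] F} (hf : f ≠ 0) :
    #{v | f v ≠ 0} * Fintype.card F = (Fintype.card F - 1) * Fintype.card V := by
  have hker : #{v | f v = 0} * Fintype.card F = Fintype.card V := by
    simp only [← Nat.card_eq_fintype_card,
      ← card_ker_mul_card_of_surjective (surjective_of_ne_zero hf), ← Nat.card_eq_finsetCard]
    congr 1
    exact Nat.card_congr (Equiv.subtypeEquivRight fun v => by simp)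
  have hsplit := card_filter_add_card_filter_not (s := univ) (fun v => f v = 0)
  rw [card_univ] at hsplit
  have hq : 1 ≤ Fintype.card F := Fintype.card_pos
  zify [hq] at hker hsplit ⊢
  linear_combination (Fintype.card F : ℤ) * hsplit - hker

section Hamming

variable {β ι : Type*} [Zero β] [DecidableEq β] [Fintype ι]

theorem apply_ne_zero_of_hammingNorm_eq_card {x : ι → β} (hx : hammingNorm x = Fintype.card ι)
    (i : ι) : x i ≠ 0 := by
  simpa using (card_filter_eq_iff.1 hx) i (mem_univ i)

theorem card_filter_eq_zero_eq_card_sub_hammingNorm (x : ι → β) :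
    #{i | x i = 0} = Fintype.card ι - hammingNorm x := by
  rw [← card_univ, ← card_filter_add_card_filter_not (s := univ) (fun i => x i = 0)]
  exact (Nat.add_sub_cancel _ _).symm

end Hamming

theorem ne_smul_of_apply_eq_zero {M ι : Type*} [MulZeroClass M] [NoZeroDivisors M]
    {x y : ι → M} {i : ι} (hx : x i ≠ 0) (hy : y i = 0) (hy0 : y ≠ 0) (a : M) : y ≠ a • x :=
  fun h => by
    have ha : a * x i = 0 := by simpa [h] using hy
    simp [h, (mul_eq_zero.1 ha).resolve_right hx] at hy0

section LinearCode

variable {F ι : Type*} [Field F] [Fintype F] [DecidableEq F] [Fintype ι]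

theorem sum_hammingNorm_mul_card (D : Submodule F (ι → F)) [Fintype D] (s : Finset ι)
    (hs : ∀ j, j ∈ s ↔ ∃ c ∈ D, c j ≠ 0) :
    (∑ c : D, hammingNorm (c : ι → F)) * Fintype.card F =
      (Fintype.card F - 1) * Fintype.card D * #s := by
  have hcoord : ∀ j ∈ s, #{c : D | (c : ι → F) j ≠ 0} * Fintype.card F =
      (Fintype.card F - 1) * Fintype.card D := fun j hj => by
    refine LinearMap.card_filter_ne_zero_mul_card (f := LinearMap.proj j ∘ₗ D.subtype)
      fun h0 => ?_
    obtain ⟨c, hc, hcj⟩ := (hs j).1 hj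
    exact hcj (LinearMap.congr_fun h0 ⟨c, hc⟩)
  have hzero : ∀ j ∉ s, #{c : D | (c : ι → F) j ≠ 0} * Fintype.card F = 0 := fun j hj => by
    rw [card_eq_zero.2 (filter_eq_empty_iff.2 fun (c : D) _ hcj => hj ((hs j).2 ⟨c, c.2, hcj⟩)),
      zero_mul]
  calc (∑ c : D, hammingNorm (c : ι → F)) * Fintype.card F
      = ∑ j, #{c : D | (c : ι → F) j ≠ 0} * Fintype.card F := by
        rw [← sum_mul]
        exact congrArg (· * _) (sum_card_bipartiteAbove_eq_sum_card_bipartiteBelow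
          (s := univ) (t := univ) (r := fun (c : D) j => (c : ι → F) j ≠ 0))
    _ = ∑ j ∈ s, (Fintype.card F - 1) * Fintype.card D := by
        rw [← sum_subset (subset_univ s) fun j _ hj => hzero j hj]
        exact sum_congr rfl hcoord
    _ = (Fintype.card F - 1) * Fintype.card D * #s := by rw [sum_const, smul_eq_mul, mul_comm]

theorem card_sub_one_mul_mul_card_of_hammingNorm_eq (D : Submodule F (ι → F)) [Fintype D]
    {w : ℕ} (hw : ∀ c ∈ D, c ≠ 0 → hammingNorm c = w) (s : Finset ι)
    (hs : ∀ j, j ∈ s ↔ ∃ c ∈ D, c j ≠ 0) :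
    (Fintype.card D - 1) * w * Fintype.card F = (Fintype.card F - 1) * Fintype.card D * #s := by
  rw [← sum_hammingNorm_mul_card D s hs]
  congr 1
  rw [← add_sum_erase _ _ (mem_univ 0), ZeroMemClass.coe_zero, hammingNorm_zero, zero_add,
    sum_congr rfl fun (c : D) hc => hw c c.2 (by simpa using ne_of_mem_erase hc), sum_const,
    card_erase_of_mem (mem_univ _), card_univ, smul_eq_mul]

theorem dvd_card_of_dvd_card_filter_eq_mul {x y : ι → F} (hx : ∀ i, x i ≠ 0) {d : ℕ}
    (hd : ∀ a : F, d ∣ #{i | y i = a * x i}) : d ∣ Fintype.card ι := by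
  rw [← card_univ, card_eq_sum_card_fiberwise (f := fun i => y i / x i) (t := univ)
    fun _ _ => mem_univ _]
  refine dvd_sum fun a _ => ?_
  simpa only [div_eq_iff (hx _)] using hd a

theorem card_sub_dvd_card_of_hammingNorm_eq_card {C : Submodule F (ι → F)} {w : ℕ}
    (hweights : ∀ x ∈ C, x ≠ 0 → hammingNorm x = w ∨ hammingNorm x = Fintype.card ι)
    {x y : ι → F} (hx : x ∈ C) (hxn : hammingNorm x = Fintype.card ι) (hy : y ∈ C)
    (hxy : ∀ a : F, y ≠ a • x) : Fintype.card ι - w ∣ Fintype.card ι := by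
  refine dvd_card_of_dvd_card_filter_eq_mul (y := y)
    (apply_ne_zero_of_hammingNorm_eq_card hxn) fun a => ?_
  have hfiber : #{i | y i = a * x i} = Fintype.card ι - hammingNorm (y - a • x) := by
    rw [← card_filter_eq_zero_eq_card_sub_hammingNorm]
    simp [sub_eq_zero]
  rcases hweights _ (C.sub_mem hy (C.smul_mem a hx)) (sub_ne_zero.2 (hxy a)) with h | h
  · rw [hfiber, h]
  · rw [hfiber, h, Nat.sub_self]
    exact dvd_zero _

end LinearCode

theorem exists_mem_apply_eq_zero_apply_ne_zero {F : Type*} [Field F] [DecidableEq F] {n : ℕ}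
    {C : Submodule F (Fin n → F)} (hproj : ∀ y ∈ dualCode C, y ≠ 0 → 3 ≤ hammingNorm y)
    {i j : Fin n} (hij : i ≠ j) : ∃ c ∈ C, c i = 0 ∧ c j ≠ 0 := by
  by_contra! h
  obtain ⟨a, ha⟩ : ∃ a : F,
      a • (LinearMap.proj i ∘ₗ C.subtype) = LinearMap.proj j ∘ₗ C.subtype := by
    have := mem_span_of_iInf_ker_le_ker
      (L := fun _ : Unit => LinearMap.proj (R := F) (φ := fun _ : Fin n => F) i ∘ₗ C.subtype)
      (K := LinearMap.proj j ∘ₗ C.subtype)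
      fun c hc => LinearMap.mem_ker.2 (h c c.2 (by simpa using hc))
    simpa [Set.range_const, Submodule.mem_span_singleton] using this
  set y : Fin n → F := Pi.single j 1 - Pi.single i a
  have hy : y ∈ dualCode C := fun c hc => by
    have := LinearMap.congr_fun ha ⟨c, hc⟩
    simp [y, mul_sub, Pi.single_apply] at this ⊢
    linear_combination -this
  have hy0 : y ≠ 0 := fun h0 => by simpa [y, hij.symm] using congrFun h0 j
  have hsupp : ({k | y k ≠ 0} : Finset (Fin n)) ⊆ {i, j} := fun k hk => by
    by_contra hk'
    simp only [mem_insert, mem_singleton, not_or] at hk'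
    simp [y, hk'.1, hk'.2] at hk
  have := (card_le_card hsupp).trans card_le_two
  have := hproj y hy hy0
  unfold hammingNorm at this
  omega

theorem mem_erase_iff_exists_mem_inf_ker_proj_ne_zero {F : Type*} [Field F] [DecidableEq F]
    {n : ℕ} {C : Submodule F (Fin n → F)} (hproj : ∀ y ∈ dualCode C, y ≠ 0 → 3 ≤ hammingNorm y)
    (i j : Fin n) : j ∈ univ.erase i ↔ ∃ c ∈ C ⊓ LinearMap.ker (LinearMap.proj i), c j ≠ 0 := by
  refine ⟨fun hj => ?_, fun ⟨c, hc, hcj⟩ => mem_erase.2 ⟨fun h => hcj (h ▸ hc.2), mem_univ j⟩⟩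
  obtain ⟨c, hc, hci, hcj⟩ :=
    exists_mem_apply_eq_zero_apply_ne_zero hproj (ne_of_mem_erase hj).symm
  exact ⟨c, ⟨hc, hci⟩, hcj⟩

theorem sub_dvd_pow_of_pow_sub_one_mul_eq {q a n w : ℕ} (hq : 2 ≤ q) (hwn : w < n)
    (hdvd : n - w ∣ n) (h : (q ^ (a + 1) - 1) * w * q = (q - 1) * q ^ (a + 1) * (n - 1)) :
    n - w ∣ q ^ a := by
  obtain ⟨k, hk⟩ := hdvd
  have hn : (n : ℤ) = (n - w : ℕ) * k := by exact_mod_cast hk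
  have hw : (w : ℤ) = (n - w : ℕ) * k - (n - w : ℕ) := by push_cast [hwn.le] at hn ⊢; linarith
  have hpow : 1 ≤ q ^ (a + 1) := Nat.one_le_pow _ _ (by omega)
  zify [hpow, (by omega : 1 ≤ q), (by omega : 1 ≤ n)] at h
  rw [hn, hw] at h
  obtain ⟨r, hr⟩ := sub_one_dvd_pow_sub_one (q : ℤ) a
  have hq0 : (q : ℤ) * (q - 1) ≠ 0 := mul_ne_zero (by omega) (by omega)
  refine Int.natCast_dvd_natCast.1 ⟨r * (q - k) + 1, mul_left_cancel₀ hq0 ?_⟩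
  push_cast
  linear_combination h + (q : ℤ) * (n - w : ℕ) * (q - k) * hr

theorem exists_eq_mul_pow_of_sub_dvd_pow {p N n w : ℕ} (hp : p.Prime) (hw : 0 < w) (hwn : w < n)
    (hdvd : n - w ∣ n) (hpow : n - w ∣ p ^ N) :
    ∃ u h : ℕ, 1 ≤ h ∧ w = h * p ^ u ∧ n = (h + 1) * p ^ u := by
  obtain ⟨u, -, hu⟩ := (Nat.dvd_prime_pow hp).1 hpow
  obtain ⟨_ | _ | h, hk⟩ := hdvd
  · omega
  · omega
  · have hwd : w + (n - w) = n := by omega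
    generalize n - w = d at hu hk hwd
    exact ⟨u, h + 1, by omega, by rw [← hu]; linarith, by rw [← hu]; linarith⟩

/-- Delsarte: if `C` is a projective two-weight `[n, k, {w, n}]_q`-code over a
field of characteristic `p`, then there are integers `u ≥ 0`, `h ≥ 1` with
`w = h·p^u` and `n = (h+1)·p^u`. -/
theorem projective_two_weight_antipodal_weights
    {p m q n w : ℕ} (hp : p.Prime) (hqpm : q = p ^ m)
    {F : Type*} [Field F] [Fintype F] [DecidableEq F]
    (hcard : Fintype.card F = q)
    (C : Submodule F (Fin n → F))
    (hproj : ∀ y ∈ dualCode C, y ≠ 0 → 3 ≤ hammingNorm y)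
    (hweights : ∀ x ∈ C, x ≠ 0 → hammingNorm x = w ∨ hammingNorm x = n)
    (hw_att : ∃ x ∈ C, x ≠ 0 ∧ hammingNorm x = w)
    (hn_att : ∃ x ∈ C, x ≠ 0 ∧ hammingNorm x = n)
    (hwn : w < n) :
    ∃ u h : ℕ, 1 ≤ h ∧ w = h * p ^ u ∧ n = (h + 1) * p ^ u := by
  classical
  obtain ⟨z, -, hz0, hzw⟩ := hw_att
  have hw : 0 < w := hzw ▸ hammingNorm_pos_iff.2 hz0
  obtain ⟨x, hxC, -, hxn⟩ := hn_att
  replace hxn : hammingNorm x = Fintype.card (Fin n) := hxn.trans (Fintype.card_fin n).symm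
  let i₀ : Fin n := ⟨0, by omega⟩
  let D := C ⊓ LinearMap.ker (LinearMap.proj i₀ : (Fin n → F) →ₗ[F] F)
  have hD : ∀ j, j ∈ univ.erase i₀ ↔ ∃ c ∈ D, c j ≠ 0 :=
    mem_erase_iff_exists_mem_inf_ker_proj_ne_zero hproj i₀
  have hDw : ∀ c ∈ D, c ≠ 0 → hammingNorm c = w := fun c hc hc0 =>
    (hweights c hc.1 hc0).resolve_right fun h =>
      apply_ne_zero_of_hammingNorm_eq_card (by simpa using h) i₀ hc.2
  obtain ⟨y, hyD, hy⟩ :=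
    (hD ⟨1, by omega⟩).1 (mem_erase.2 ⟨by simp [i₀, Fin.ext_iff], mem_univ _⟩)
  have hdvd : n - w ∣ n := by
    simpa using card_sub_dvd_card_of_hammingNorm_eq_card (by simpa using hweights) hxC hxn hyD.1
      (ne_smul_of_apply_eq_zero (apply_ne_zero_of_hammingNorm_eq_card hxn i₀) hyD.2
        fun h => hy (by simp [h]))
  have : Nontrivial D := ⟨⟨y, hyD⟩, 0, fun h => by simp_all⟩
  obtain ⟨a, ha⟩ := Module.exists_card_eq_pow_succ F D
  have hmoment := card_sub_one_mul_mul_card_of_hammingNorm_eq D hDw _ hD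
  rw [ha, hcard, card_erase_of_mem (mem_univ _), card_univ, Fintype.card_fin] at hmoment
  have hdvd_pow :=
    sub_dvd_pow_of_pow_sub_one_mul_eq (hcard ▸ Fintype.one_lt_card) hwn hdvd hmoment
  rw [hqpm, ← pow_mul] at hdvd_pow
  exact exists_eq_mul_pow_of_sub_dvd_pow hp hw hwn hdvd hdvd_pow
end

section
/- Let A be a finite alphabet with |A| = q ≥ 2 and let C ⊆ A^n be a code of cardinality |C| = qn whose minimum distance is (q−1)n/q, i.e., q·d(x,y) ≥ (q−1)n for all distinct x, y ∈ C. Then C can be partitioned into n pairwise disjoint simplex subcodes: there is a partition of C into n subsets, each of cardinality q, such that any two distinct codewords lying in the same subset are at Hamming distance exactly n. -/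
/-!
Write `agreement x y = n - d(x,y)`; the distance hypothesis says `q * agreement x y ≤ n`.
Double counting agreements inside a set `B` of codewords sharing a symbol at one coordinate,
against Cauchy–Schwarz in the other coordinates, gives `#B ≤ n`. The `q` such sets at a
coordinate cover the code, so each has exactly `n` elements and every inequality is tight:
two codewords agree nowhere or in exactly `n / q` coordinates, agreeing nowhere is transitive,
and every codeword agrees nowhere with exactly `q - 1` others. The classes of "equal or
agreeing nowhere" are the `n` simplexes.
-/

open Finset Function

section Agreement

variable {ι A : Type*} [DecidableEq A]

def symbolCount (B : Finset (ι → A)) (i : ι) (a : A) : ℕ := #{x ∈ B | x i = a}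

theorem sum_symbolCount [Fintype A] (B : Finset (ι → A)) (i : ι) :
    ∑ a, symbolCount B i a = #B :=
  (card_eq_sum_card_fiberwise fun x _ => mem_univ (x i)).symm

theorem sum_sq_symbolCount [Fintype A] (B : Finset (ι → A)) (i : ι) :
    ∑ a, symbolCount B i a ^ 2 = ∑ x ∈ B, symbolCount B i (x i) := by
  rw [← sum_fiberwise B (fun x => x i) (fun x => symbolCount B i (x i))]
  refine sum_congr rfl fun a _ => ?_
  rw [sum_congr rfl fun x hx => by rw [(mem_filter.1 hx).2], sum_const, smul_eq_mul, sq]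
  rfl

theorem sum_sq_symbolCount_of_forall_apply_eq [Fintype A] {B : Finset (ι → A)} {j : ι} {b : A}
    (hB : ∀ x ∈ B, x j = b) : ∑ a, symbolCount B j a ^ 2 = #B ^ 2 := by
  rw [sum_sq_symbolCount, sum_congr rfl fun x hx => by rw [hB x hx], sum_const, smul_eq_mul, sq,
    symbolCount, filter_true_of_mem hB]

theorem sq_card_le_mul_sum_sq_symbolCount [Fintype A] {q : ℕ} (hq : Fintype.card A = q)
    (B : Finset (ι → A)) (i : ι) : #B ^ 2 ≤ q * ∑ a, symbolCount B i a ^ 2 := by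
  simpa [sum_symbolCount, hq] using sq_sum_le_card_mul_sum_sq (s := univ) (f := symbolCount B i)

variable [Fintype ι]

def agreement (x y : ι → A) : ℕ := #{i | x i = y i}

theorem hammingDist_add_agreement (x y : ι → A) :
    hammingDist x y + agreement x y = Fintype.card ι := by
  rw [hammingDist, agreement, add_comm, card_filter_add_card_filter_not, card_univ]

theorem agreement_comm (x y : ι → A) : agreement x y = agreement y x := by
  simp only [agreement, eq_comm]

theorem agreement_self (x : ι → A) : agreement x x = Fintype.card ι := by
  simp [agreement]

theorem agreement_eq_zero_iff_hammingDist_eq (x y : ι → A) :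
    agreement x y = 0 ↔ hammingDist x y = Fintype.card ι := by
  have := hammingDist_add_agreement x y
  omega

theorem agreement_eq_zero_iff {x y : ι → A} : agreement x y = 0 ↔ ∀ i, x i ≠ y i := by
  simp [agreement, Finset.card_eq_zero, Finset.filter_eq_empty_iff]

theorem le_mul_hammingDist_iff_mul_agreement_le (q : ℕ) (x y : ι → A) :
    (q - 1) * Fintype.card ι ≤ q * hammingDist x y ↔
      q * agreement x y ≤ Fintype.card ι := by
  rw [← hammingDist_add_agreement x y]
  rcases q with _ | q
  · simp
  · simp only [Nat.add_sub_cancel, add_mul, one_mul, mul_add]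
    omega

theorem sum_agreement_eq_sum_symbolCount (B : Finset (ι → A)) (x : ι → A) :
    ∑ y ∈ B, agreement x y = ∑ i, symbolCount B i (x i) := by
  simp only [agreement, symbolCount, card_filter]
  rw [sum_comm]
  simp only [eq_comm]

theorem sum_offDiag_agreement_add [Fintype A] (B : Finset (ι → A)) :
    ∑ p ∈ B.offDiag, agreement p.1 p.2 + #B * Fintype.card ι
      = ∑ i, ∑ a, symbolCount B i a ^ 2 := by
  have hdiag : ∑ p ∈ B.diag, agreement p.1 p.2 = #B * Fintype.card ι := by
    simp [agreement_self]
  rw [← hdiag, add_comm, ← sum_union (disjoint_diag_offDiag B), diag_union_offDiag,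
    sum_product, sum_congr rfl fun x _ => sum_agreement_eq_sum_symbolCount B x, sum_comm]
  exact sum_congr rfl fun i _ => (sum_sq_symbolCount B i).symm

end Agreement

theorem card_mul_eq_sum_of_card_mul_sum_sq_eq {α : Type*} [Fintype α] {f : α → ℕ}
    (h : Fintype.card α * ∑ a, f a ^ 2 = (∑ a, f a) ^ 2) (a : α) :
    Fintype.card α * f a = ∑ a, f a := by
  set k := Fintype.card α
  set s := ∑ a, f a
  have hzero : ∑ a, ((k : ℤ) * f a - s) ^ 2 = 0 := by
    have hz : (k : ℤ) * ∑ a, (f a : ℤ) ^ 2 = (∑ a, (f a : ℤ)) ^ 2 := by exact_mod_cast h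
    simp only [sub_sq, sum_add_distrib, sum_sub_distrib, mul_pow, ← mul_sum, sum_const,
      ← sum_mul, card_univ, nsmul_eq_mul, s]
    push_cast
    linear_combination (k : ℤ) * hz
  have := (sum_eq_zero_iff_of_nonneg fun b _ => sq_nonneg ((k : ℤ) * f b - s)).1 hzero a
    (mem_univ a)
  exact_mod_cast sub_eq_zero.1 (pow_eq_zero_iff two_ne_zero |>.1 this)

section ConstantCoordinate

variable {A : Type*} [Fintype A] [DecidableEq A] {n q : ℕ} {B : Finset (Fin n → A)} {j : Fin n}
  {b : A}

/-- Both sums on the left have nonnegative summands (by Cauchy–Schwarz, resp. the distance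
bound), so this forces `#B ≤ n`, and all summands vanish when `#B = n`. -/
theorem slack_sum_eq_of_forall_apply_eq (hB : ∀ x ∈ B, x j = b) :
    ∑ i ∈ univ.erase j, ((q : ℤ) * ∑ a, symbolCount B i a ^ 2 - #B ^ 2)
      + ∑ p ∈ B.offDiag, ((n : ℤ) - q * agreement p.1 p.2)
      = (q - 1) * #B * (n - #B) := by
  have hsum := sum_offDiag_agreement_add B
  rw [Fintype.card_fin, ← add_sum_erase _ _ (mem_univ j),
    sum_sq_symbolCount_of_forall_apply_eq hB] at hsum
  have hsumℤ : (∑ p ∈ B.offDiag, agreement p.1 p.2 : ℤ) + #B * n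
      = #B ^ 2 + ∑ i ∈ univ.erase j, ∑ a, (symbolCount B i a : ℤ) ^ 2 := by
    exact_mod_cast hsum
  have hoff : (#B.offDiag : ℤ) = #B * #B - #B := by
    rw [offDiag_card, Nat.cast_sub (Nat.le_mul_self _), Nat.cast_mul]
  have hn : ((n - 1 : ℕ) : ℤ) = n - 1 := Nat.cast_pred j.pos
  simp only [sum_sub_distrib, ← mul_sum, sum_const, card_erase_of_mem (mem_univ j), card_univ,
    Fintype.card_fin, nsmul_eq_mul, hoff, hn]
  push_cast
  linear_combination -(q : ℤ) * hsumℤ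

theorem slacks_nonneg (hq : Fintype.card A = q)
    (hagree : (B : Set (Fin n → A)).Pairwise fun x y => q * agreement x y ≤ n) :
    (∀ i, 0 ≤ (q : ℤ) * ∑ a, symbolCount B i a ^ 2 - #B ^ 2) ∧
      ∀ p ∈ B.offDiag, 0 ≤ (n : ℤ) - q * agreement p.1 p.2 := by
  refine ⟨fun i => ?_, fun p hp => ?_⟩
  · exact sub_nonneg.2 (by exact_mod_cast sq_card_le_mul_sum_sq_symbolCount hq B i)
  · obtain ⟨h1, h2, hne⟩ := mem_offDiag.1 hp
    exact sub_nonneg.2 (by exact_mod_cast hagree h1 h2 hne)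

theorem card_le_of_forall_apply_eq (hq : Fintype.card A = q) (hq2 : 2 ≤ q)
    (hagree : (B : Set (Fin n → A)).Pairwise fun x y => q * agreement x y ≤ n)
    (hB : ∀ x ∈ B, x j = b) : #B ≤ n := by
  obtain ⟨h1, h2⟩ := slacks_nonneg hq hagree
  have hprod : 0 ≤ ((q : ℤ) - 1) * #B * (n - #B) :=
    slack_sum_eq_of_forall_apply_eq hB ▸
      add_nonneg (sum_nonneg fun i _ => h1 i) (sum_nonneg h2)
  by_contra! hlt
  have hq1 : (0 : ℤ) < q - 1 := by
    have : (2 : ℤ) ≤ q := by exact_mod_cast hq2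
    linarith
  have hB0 : (0 : ℤ) < #B := by exact_mod_cast hlt.pos
  have hlt' : (n : ℤ) - #B < 0 := by
    have : (n : ℤ) < #B := by exact_mod_cast hlt
    linarith
  exact (mul_neg_of_pos_of_neg (mul_pos hq1 hB0) hlt').not_ge hprod

theorem slacks_eq_zero_of_card_eq (hq : Fintype.card A = q)
    (hagree : (B : Set (Fin n → A)).Pairwise fun x y => q * agreement x y ≤ n)
    (hB : ∀ x ∈ B, x j = b) (hcard : #B = n) :
    (∀ i ∈ univ.erase j, q * ∑ a, symbolCount B i a ^ 2 = n ^ 2) ∧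
      (B : Set (Fin n → A)).Pairwise fun x y => q * agreement x y = n := by
  obtain ⟨h1, h2⟩ := slacks_nonneg hq hagree
  have hslack := slack_sum_eq_of_forall_apply_eq (q := q) hB
  rw [show (n : ℤ) - #B = 0 by rw [hcard, sub_self], mul_zero] at hslack
  obtain ⟨hzero1, hzero2⟩ :=
    (add_eq_zero_iff_of_nonneg (sum_nonneg fun i _ => h1 i) (sum_nonneg h2)).1 hslack
  refine ⟨fun i hi => ?_, fun x hx y hy hxy => ?_⟩
  · have := (sum_eq_zero_iff_of_nonneg fun i _ => h1 i).1 hzero1 i hi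
    rw [hcard] at this
    exact_mod_cast sub_eq_zero.1 this
  · have := (sum_eq_zero_iff_of_nonneg h2).1 hzero2 (x, y) (mem_offDiag.2 ⟨hx, hy, hxy⟩)
    exact_mod_cast (sub_eq_zero.1 this).symm

theorem mul_symbolCount_eq_of_card_eq (hq : Fintype.card A = q)
    (hagree : (B : Set (Fin n → A)).Pairwise fun x y => q * agreement x y ≤ n)
    (hB : ∀ x ∈ B, x j = b) (hcard : #B = n) {i : Fin n} (hij : i ≠ j) (a : A) :
    q * symbolCount B i a = n := by
  have hsq : Fintype.card A * ∑ a, symbolCount B i a ^ 2 = (∑ a, symbolCount B i a) ^ 2 := by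
    rw [hq, sum_symbolCount, hcard]
    exact (slacks_eq_zero_of_card_eq hq hagree hB hcard).1 i (mem_erase.2 ⟨hij, mem_univ i⟩)
  rw [← hq, card_mul_eq_sum_of_card_mul_sum_sq_eq hsq a, sum_symbolCount, hcard]

end ConstantCoordinate

section Code

variable {A : Type*} [DecidableEq A] {n q : ℕ} {F : Finset (Fin n → A)}

def simplexAt (F : Finset (Fin n → A)) (x : Fin n → A) : Finset (Fin n → A) :=
  insert x {y ∈ F | agreement x y = 0}

theorem mem_simplexAt_self (x : Fin n → A) : x ∈ simplexAt F x := mem_insert_self _ _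

theorem simplexAt_subset {x : Fin n → A} (hx : x ∈ F) : simplexAt F x ⊆ F :=
  insert_subset hx (filter_subset _ _)

variable [Fintype A]

/-- The codes of the theorem, with `q d(x,y) ≥ (q-1)n` rewritten as `q (n - d(x,y)) ≤ n`. -/
structure IsExtremalCode (q : ℕ) (F : Finset (Fin n → A)) : Prop where
  card_alphabet : Fintype.card A = q
  two_le : 2 ≤ q
  card_eq : #F = q * n
  agreement_le : (F : Set (Fin n → A)).Pairwise fun x y => q * agreement x y ≤ n

namespace IsExtremalCode

theorem length_pos (hF : IsExtremalCode q F) {x : Fin n → A} (hx : x ∈ F) : 0 < n :=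
  Nat.pos_of_mul_pos_left (hF.card_eq ▸ card_pos.2 ⟨x, hx⟩)

theorem pairwise_filter (hF : IsExtremalCode q F) (p : (Fin n → A) → Prop) [DecidablePred p] :
    (({x ∈ F | p x} : Finset (Fin n → A)) : Set (Fin n → A)).Pairwise
      fun x y => q * agreement x y ≤ n :=
  hF.agreement_le.mono (coe_subset.2 (filter_subset _ _))

theorem symbolCount_eq (hF : IsExtremalCode q F) (i : Fin n) (a : A) : symbolCount F i a = n := by
  have hle : ∀ c ∈ univ, symbolCount F i c ≤ n := fun c _ =>
    card_le_of_forall_apply_eq hF.card_alphabet hF.two_le (hF.pairwise_filter _)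
      fun x hx => (mem_filter.1 hx).2
  refine (sum_eq_sum_iff_of_le hle).1 ?_ a (mem_univ a)
  rw [sum_symbolCount, sum_const, card_univ, hF.card_alphabet, hF.card_eq, smul_eq_mul]

theorem mul_agreement_eq_of_agreement_ne_zero (hF : IsExtremalCode q F) {x y : Fin n → A}
    (hx : x ∈ F) (hy : y ∈ F) (hxy : x ≠ y) (h : agreement x y ≠ 0) :
    q * agreement x y = n := by
  obtain ⟨j, hj⟩ := not_forall_not.1 (mt agreement_eq_zero_iff.2 h)
  exact (slacks_eq_zero_of_card_eq (B := {w ∈ F | w j = x j}) hF.card_alphabet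
    (hF.pairwise_filter _) (fun w hw => (mem_filter.1 hw).2) (hF.symbolCount_eq j (x j))).2
    (mem_filter.2 ⟨hx, rfl⟩) (mem_filter.2 ⟨hy, hj.symm⟩) hxy

theorem sum_slack_eq_card_filter_mul (hF : IsExtremalCode q F) {x : Fin n → A} (hx : x ∈ F)
    {S : Finset (Fin n → A)} (hS : S ⊆ F) (hxS : x ∉ S) :
    ∑ w ∈ S, ((n : ℤ) - q * agreement x w) = #{w ∈ S | agreement x w = 0} * n := by
  rw [natCast_card_filter, sum_mul]
  refine sum_congr rfl fun w hw => ?_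
  by_cases h : agreement x w = 0
  · simp [h]
  · have hxw : x ≠ w := fun hxw => hxS (hxw ▸ hw)
    rw [if_neg h, zero_mul, ← Nat.cast_mul,
      hF.mul_agreement_eq_of_agreement_ne_zero hx (hS hw) hxw h, sub_self]

theorem card_filter_agreement_eq_zero_add_one (hF : IsExtremalCode q F) {x : Fin n → A}
    (hx : x ∈ F) : #{y ∈ F | agreement x y = 0} + 1 = q := by
  have hn := hF.length_pos hx
  have hrow : ∑ y ∈ F, agreement x y = n * n := by
    simp [sum_agreement_eq_sum_symbolCount, hF.symbolCount_eq]
  rw [← add_sum_erase F _ hx, agreement_self, Fintype.card_fin] at hrow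
  have hrowℤ : (n : ℤ) + ∑ y ∈ F.erase x, (agreement x y : ℤ) = n * n := by
    exact_mod_cast hrow
  have hslack := hF.sum_slack_eq_card_filter_mul hx (erase_subset x F) (notMem_erase x F)
  have hfilter : {y ∈ F.erase x | agreement x y = 0} = {y ∈ F | agreement x y = 0} := by
    rw [filter_erase, erase_eq_of_notMem]
    simp [agreement_self, hn.ne']
  rw [hfilter, sum_sub_distrib, ← mul_sum, sum_const, card_erase_of_mem hx, hF.card_eq,
    nsmul_eq_mul, Nat.cast_pred (Nat.mul_pos (by linarith [hF.two_le]) hn)] at hslack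
  have hmul : ((#{y ∈ F | agreement x y = 0} + 1 : ℕ) : ℤ) * n = q * n := by
    push_cast at hslack ⊢
    linear_combination -hslack - (q : ℤ) * hrowℤ
  exact_mod_cast mul_right_cancel₀ (by exact_mod_cast hn.ne') hmul

theorem agreement_eq_zero_of_agreement_eq_zero (hF : IsExtremalCode q F) {x y z : Fin n → A}
    (hx : x ∈ F) (hy : y ∈ F) (hz : z ∈ F) (hxy : agreement x y = 0) (hxz : agreement x z = 0)
    (hyz : y ≠ z) : agreement y z = 0 := by
  -- `x` lies outside the block `B ∋ y, z` and meets it in `(n - 1) n / q` agreements in total,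
  -- so it agrees nowhere with exactly one member of `B`.
  by_contra h
  obtain ⟨j, hj⟩ := not_forall_not.1 (mt agreement_eq_zero_iff.2 h)
  set B : Finset (Fin n → A) := {w ∈ F | w j = y j}
  have hBj : ∀ w ∈ B, w j = y j := fun w hw => (mem_filter.1 hw).2
  have hBcard : #B = n := hF.symbolCount_eq j (y j)
  have hxj : x j ≠ y j := agreement_eq_zero_iff.1 hxy j
  have hxB : x ∉ B := fun hxB => hxj (hBj x hxB)
  have hcount_j : symbolCount B j (x j) = 0 :=
    card_eq_zero.2 (filter_eq_empty_iff.2 fun w hw hwx => hxj (hwx ▸ hBj w hw))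
  have hrow : ∑ w ∈ B, q * agreement x w = (n - 1) * n := by
    rw [← mul_sum, sum_agreement_eq_sum_symbolCount, ← add_sum_erase _ _ (mem_univ j), hcount_j,
      zero_add, mul_sum, sum_congr rfl fun i hi => mul_symbolCount_eq_of_card_eq
        hF.card_alphabet (hF.pairwise_filter _) hBj hBcard (ne_of_mem_erase hi) (x i),
      sum_const, card_erase_of_mem (mem_univ j), card_univ, Fintype.card_fin, smul_eq_mul]
  have hrowℤ : ∑ w ∈ B, (q : ℤ) * agreement x w = (n - 1) * n := by
    rw [← Nat.cast_pred j.pos]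
    exact_mod_cast hrow
  have hslack := hF.sum_slack_eq_card_filter_mul hx (filter_subset _ _) hxB
  rw [sum_sub_distrib, hrowℤ, sum_const, hBcard, nsmul_eq_mul] at hslack
  have hone : #{w ∈ B | agreement x w = 0} = 1 := by
    have hmul : ((#{w ∈ B | agreement x w = 0} : ℕ) : ℤ) * n = 1 * n := by
      linear_combination -hslack
    exact_mod_cast mul_right_cancel₀ (by exact_mod_cast j.pos.ne') hmul
  have htwo : 1 < #{w ∈ B | agreement x w = 0} :=
    one_lt_card.2 ⟨y, mem_filter.2 ⟨mem_filter.2 ⟨hy, rfl⟩, hxy⟩,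
      z, mem_filter.2 ⟨mem_filter.2 ⟨hz, hj.symm⟩, hxz⟩, hyz⟩
  omega

theorem card_simplexAt (hF : IsExtremalCode q F) {x : Fin n → A} (hx : x ∈ F) :
    #(simplexAt F x) = q := by
  rw [simplexAt, card_insert_of_notMem, hF.card_filter_agreement_eq_zero_add_one hx]
  simp [agreement_self, (hF.length_pos hx).ne']

theorem agreement_eq_zero_of_mem_simplexAt (hF : IsExtremalCode q F) {x y z : Fin n → A}
    (hx : x ∈ F) (hy : y ∈ simplexAt F x) (hz : z ∈ simplexAt F x) (hyz : y ≠ z) :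
    agreement y z = 0 := by
  rcases mem_insert.1 hy with rfl | hy
  · exact (mem_filter.1 ((mem_insert.1 hz).resolve_left hyz.symm)).2
  rcases mem_insert.1 hz with rfl | hz
  · exact agreement_comm y z ▸ (mem_filter.1 hy).2
  exact hF.agreement_eq_zero_of_agreement_eq_zero hx (mem_filter.1 hy).1 (mem_filter.1 hz).1
    (mem_filter.1 hy).2 (mem_filter.1 hz).2 hyz

theorem simplexAt_subset_simplexAt (hF : IsExtremalCode q F) {x y : Fin n → A} (hx : x ∈ F)
    (hy : y ∈ simplexAt F x) : simplexAt F x ⊆ simplexAt F y := by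
  intro w hw
  by_cases hwy : w = y
  · exact hwy ▸ mem_simplexAt_self w
  exact mem_insert_of_mem (mem_filter.2 ⟨simplexAt_subset hx hw,
    hF.agreement_eq_zero_of_mem_simplexAt hx hy hw (Ne.symm hwy)⟩)

theorem simplexAt_eq_of_mem (hF : IsExtremalCode q F) {x y : Fin n → A} (hx : x ∈ F)
    (hy : y ∈ simplexAt F x) : simplexAt F y = simplexAt F x :=
  (hF.simplexAt_subset_simplexAt (simplexAt_subset hx hy)
    (hF.simplexAt_subset_simplexAt hx hy (mem_simplexAt_self x))).antisymm
    (hF.simplexAt_subset_simplexAt hx hy)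

end IsExtremalCode

end Code

theorem exists_partition_of_classes {α : Type*} [DecidableEq α] {F : Finset α}
    {T : α → Finset α} {q n : ℕ} (hq : 0 < q) (hF : #F = q * n)
    (hself : ∀ x ∈ F, x ∈ T x) (hsub : ∀ x ∈ F, T x ⊆ F)
    (heq : ∀ x ∈ F, ∀ y ∈ T x, T y = T x) (hcard : ∀ x ∈ F, #(T x) = q) :
    ∃ parts : Fin n → Finset α, Pairwise (Disjoint on parts) ∧ univ.biUnion parts = F ∧
      ∀ i, ∃ x ∈ F, parts i = T x := by
  set P := F.image T
  have hdisj : (P : Set (Finset α)).PairwiseDisjoint id := by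
    rintro _ hs _ ht hst
    obtain ⟨x, hx, rfl⟩ := mem_image.1 hs
    obtain ⟨y, hy, rfl⟩ := mem_image.1 ht
    refine disjoint_left.2 fun w hwx hwy => hst ?_
    rw [← heq x hx w hwx, heq y hy w hwy]
  have hunion : P.biUnion id = F := by
    ext w
    simp only [mem_biUnion, mem_image, id, P]
    exact ⟨fun ⟨_, ⟨x, hx, hxs⟩, hw⟩ => hsub x hx (hxs ▸ hw),
      fun hw => ⟨T w, ⟨w, hw, rfl⟩, hself w hw⟩⟩
  have hPcard : #P = n := by
    have := card_biUnion hdisj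
    rw [hunion, hF, sum_const_nat fun s hs => ?_] at this
    · exact Nat.eq_of_mul_eq_mul_left hq (this.trans (mul_comm _ _)).symm
    obtain ⟨x, hx, rfl⟩ := mem_image.1 hs
    exact hcard x hx
  set e : Fin n ≃ P := (P.equivFinOfCardEq hPcard).symm
  refine ⟨fun i => e i, fun i j hij => hdisj (e i).2 (e j).2 ?_, ?_, fun i => ?_⟩
  · exact fun h => hij (e.injective (Subtype.ext h))
  · rw [← hunion]
    ext w
    simp only [mem_biUnion, mem_univ, true_and, id]
    exact ⟨fun ⟨i, hw⟩ => ⟨e i, (e i).2, hw⟩,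
      fun ⟨s, hs, hw⟩ => ⟨e.symm ⟨s, hs⟩, by simpa⟩⟩
  · obtain ⟨x, hx, hxs⟩ := mem_image.1 (e i).2
    exact ⟨x, hx, hxs.symm⟩

/-- A `q`-ary code of length `n`, cardinality `qn` and minimum distance
`(q-1)n/q` can be partitioned into `n` pairwise disjoint simplex subcodes,
i.e. subsets of `q` codewords any two of which are at Hamming distance
exactly `n`. -/
theorem partition_into_simplexes
    {A : Type*} [Fintype A] [DecidableEq A] {q n : ℕ}
    (hq : Fintype.card A = q) (hq2 : 2 ≤ q)
    (C : Set (Fin n → A))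
    (hcardC : Nat.card C = q * n)
    (hdist : ∀ x ∈ C, ∀ y ∈ C, x ≠ y → (q - 1) * n ≤ q * hammingDist x y) :
    ∃ parts : Fin n → Set (Fin n → A),
      (∀ i j : Fin n, i ≠ j → Disjoint (parts i) (parts j)) ∧
      (⋃ i, parts i) = C ∧
      ∀ i : Fin n, Nat.card (parts i) = q ∧
        ∀ x ∈ parts i, ∀ y ∈ parts i, x ≠ y → hammingDist x y = n := by
  set F := C.toFinite.toFinset
  have hFcard : #F = q * n := by rw [← hcardC, Nat.card_eq_card_finite_toFinset]
  have hF : IsExtremalCode q F := ⟨hq, hq2, hFcard, fun x hx y hy hxy => by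
    simpa using (le_mul_hammingDist_iff_mul_agreement_le q x y).1
      (by simpa using hdist x (by simpa [F] using hx) y (by simpa [F] using hy) hxy)⟩
  obtain ⟨parts, hdisj, hunion, hparts⟩ := exists_partition_of_classes (by omega) hFcard
    (fun x _ => mem_simplexAt_self x) (fun _ => simplexAt_subset)
    (fun _ hx _ => hF.simplexAt_eq_of_mem hx) (fun _ => hF.card_simplexAt)
  refine ⟨fun i => parts i, fun i j hij => disjoint_coe.2 (hdisj hij), ?_, fun i => ?_⟩
  · rw [← C.toFinite.coe_toFinset]
    change _ = (F : Set (Fin n → A))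
    rw [← hunion]
    simp
  obtain ⟨x, hx, hi⟩ := hparts i
  refine ⟨by simp [hi, hF.card_simplexAt hx], fun y hy z hz hyz => ?_⟩
  simp only [hi, mem_coe] at hy hz
  simpa using (agreement_eq_zero_iff_hammingDist_eq y z).1
    (hF.agreement_eq_zero_of_mem_simplexAt hx hy hz hyz)
end

section
/- Let A be a finite alphabet with |A| = q ≥ 2 and let C ⊆ A^n be a distance-invariant simplex two-weight (n,N,{d,n})_q-code (pairwise distances in {d,n} with d < n, both attained; C contains q codewords pairwise at distance n; C is distance invariant). Then q·d ≤ (q−1)·n. -/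
/-!
The `q` words of a simplex pairwise disagree in every coordinate, so in each coordinate they
use every symbol of the alphabet exactly once. Hence any word `x` agrees with exactly one of
them in each coordinate, and its distances to the simplex sum to `n (q - 1)`. Since the smaller
distance `d` is attained, some codeword `x` lies outside the simplex; its `q` distances to the
simplex are each `d` or `n`, so at least `d`, giving `q d ≤ (q - 1) n`.
-/

open Finset

section HammingSimplex

variable {ι α : Type*} [Fintype ι] [DecidableEq α]

theorem hammingDist_eq_card_iff {x y : ι → α} :
    hammingDist x y = Fintype.card ι ↔ ∀ i, x i ≠ y i := by
  rw [hammingDist, ← card_univ, card_filter_eq_iff]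
  simp only [mem_univ, forall_const]

theorem sum_hammingDist_eq_sum_card_filter_ne (S : Finset (ι → α)) (x : ι → α) :
    ∑ s ∈ S, hammingDist x s = ∑ i, #{s ∈ S | x i ≠ s i} := by
  simp only [hammingDist, card_filter]
  exact sum_comm

theorem card_filter_ne_of_injOn_of_card_eq {β : Type*} [DecidableEq β] [Fintype α] {S : Finset β} {f : β → α}
    (hf : Set.InjOn f S) (hS : #S = Fintype.card α) (a : α) :
    #{s ∈ S | a ≠ f s} = Fintype.card α - 1 := by
  have himage : S.image f = univ := eq_univ_of_card _ (by rw [card_image_of_injOn hf, hS])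
  obtain ⟨s, hs, rfl⟩ := mem_image.1 (himage ▸ mem_univ a)
  have hfilter : {t ∈ S | f s ≠ f t} = S.erase s := by
    ext t
    simp only [mem_filter, mem_erase]
    exact ⟨fun ⟨ht, hst⟩ => ⟨fun h => hst (h ▸ rfl), ht⟩,
      fun ⟨hts, ht⟩ => ⟨ht, fun hst => hts (hf hs ht hst).symm⟩⟩
  rw [hfilter, card_erase_of_mem hs, hS]

theorem sum_hammingDist_of_pairwise_hammingDist_eq_card [Fintype α] {S : Finset (ι → α)}
    (hS : #S = Fintype.card α)
    (hdist : ∀ s ∈ S, ∀ t ∈ S, s ≠ t → hammingDist s t = Fintype.card ι) (x : ι → α) :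
    ∑ s ∈ S, hammingDist x s = Fintype.card ι * (Fintype.card α - 1) := by
  have hinj (i : ι) : Set.InjOn (fun s : ι → α => s i) S := fun s hs t ht hst =>
    by_contra fun hne => hammingDist_eq_card_iff.1 (hdist s hs t ht hne) i hst
  simp [sum_hammingDist_eq_sum_card_filter_ne, card_filter_ne_of_injOn_of_card_eq (hinj _) hS]

end HammingSimplex

theorem simplex_code_distance_bound_general
    {A : Type*} [Fintype A] [DecidableEq A] {q n d : ℕ}
    (hq : Fintype.card A = q)
    (C : Set (Fin n → A))
    (hdist : ∀ x ∈ C, ∀ y ∈ C, x ≠ y →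
      hammingDist x y = d ∨ hammingDist x y = n)
    (hdn : d < n)
    (hd_att : ∃ x ∈ C, ∃ y ∈ C, x ≠ y ∧ hammingDist x y = d)
    (hsimplex : ∃ S ⊆ C, Nat.card S = q ∧
      ∀ x ∈ S, ∀ y ∈ S, x ≠ y → hammingDist x y = n) :
    q * d ≤ (q - 1) * n := by
  classical
  obtain ⟨S, hSC, hScard, hSdist⟩ := hsimplex
  obtain ⟨x, hxC, hxS⟩ : ∃ x ∈ C, x ∉ S := by
    obtain ⟨x, hx, y, hy, hxy, hd⟩ := hd_att
    by_contra! hCS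
    exact hdn.ne (hd ▸ hSdist x (hCS x hx) y (hCS y hy) hxy)
  have hfar (s) (hs : s ∈ S.toFinset) : d ≤ hammingDist x s := by
    rw [Set.mem_toFinset] at hs
    rcases hdist x hxC s (hSC hs) fun h => hxS (h ▸ hs) with h | h <;> omega
  have hsum := sum_hammingDist_of_pairwise_hammingDist_eq_card (S := S.toFinset)
    (by rw [← Nat.card_eq_card_toFinset, hScard, hq])
    (by simpa only [Set.mem_toFinset, Fintype.card_fin] using hSdist) x
  calc q * d = #S.toFinset * d := by rw [← Nat.card_eq_card_toFinset, hScard]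
    _ ≤ ∑ s ∈ S.toFinset, hammingDist x s := card_nsmul_le_sum _ _ _ hfar
    _ = (q - 1) * n := by rw [hsum, Fintype.card_fin, hq, mul_comm]

/-- In a distance-invariant simplex two-weight `(n, N, {d, n})_q`-code, the
smaller distance satisfies the Plotkin-type inequality `q·d ≤ (q-1)·n`. -/
theorem simplex_code_distance_bound
    {A : Type*} [Fintype A] [DecidableEq A] {q n d : ℕ}
    (hq : Fintype.card A = q) (hq2 : 2 ≤ q)
    (C : Set (Fin n → A))
    (hdist : ∀ x ∈ C, ∀ y ∈ C, x ≠ y →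
      hammingDist x y = d ∨ hammingDist x y = n)
    (hdn : d < n)
    (hd_att : ∃ x ∈ C, ∃ y ∈ C, x ≠ y ∧ hammingDist x y = d)
    (hn_att : ∃ x ∈ C, ∃ y ∈ C, x ≠ y ∧ hammingDist x y = n)
    (hsimplex : ∃ S ⊆ C, Nat.card S = q ∧
      ∀ x ∈ S, ∀ y ∈ S, x ≠ y → hammingDist x y = n)
    (hinv : ∀ c ∈ C, ∀ c' ∈ C, ∀ i : ℕ,
      Nat.card {x : Fin n → A | x ∈ C ∧ hammingDist c x = i} =
        Nat.card {x : Fin n → A | x ∈ C ∧ hammingDist c' x = i}) :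
    q * d ≤ (q - 1) * n :=
  simplex_code_distance_bound_general hq C hdist hdn hd_att hsimplex
end

section
/- Let F be a finite field with q elements and let C be a linear code in F^n whose nonzero codewords all have Hamming weight d or n (with d < n, both values attained), and suppose the all-one vector 1 = (1,1,…,1) belongs to C. Then for every codeword v ∈ C that is not a scalar multiple of the all-one vector, every symbol α ∈ F that occurs in some coordinate of v occurs in v exactly n − d times. -/
/-!
For a symbol `α` occurring in `v`, the codeword `v - α • 1` is nonzero (as `v` is not constant)
and vanishes somewhere, so it is not of full weight `n`; hence it has weight `d`. Its zeros are
exactly the positions where `v` equals `α`, so there are `n - d` of them.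
-/

open Finset

theorem hammingNorm_lt_card_of_apply_eq_zero {ι : Type*} [Fintype ι] {β : ι → Type*}
    [∀ i, Zero (β i)] [∀ i, DecidableEq (β i)] {x : ∀ i, β i} {i : ι} (hi : x i = 0) :
    hammingNorm x < Fintype.card ι :=
  card_lt_univ_of_notMem (s := {j | x j ≠ 0}) (by simpa using hi)

theorem card_filter_eq_add_hammingNorm_sub_const {ι β : Type*} [Fintype ι] [AddGroup β]
    [DecidableEq β] (v : ι → β) (a : β) :
    #{i | v i = a} + hammingNorm (v - fun _ => a) = Fintype.card ι := by
  simp only [hammingNorm, Pi.sub_apply, sub_ne_zero]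
  exact card_filter_add_card_filter_not _

theorem two_weight_symbol_multiplicity_general
    {F : Type*} [Field F] [DecidableEq F] {n d : ℕ}
    (C : Submodule F (Fin n → F))
    (hweights : ∀ x ∈ C, x ≠ 0 → hammingNorm x = d ∨ hammingNorm x = n)
    (hone : (fun _ : Fin n => (1 : F)) ∈ C) :
    ∀ v ∈ C, (∀ l : F, v ≠ fun _ : Fin n => l) →
      ∀ α : F, (∃ i : Fin n, v i = α) →
        Nat.card {i : Fin n | v i = α} = n - d := by
  rintro v hv hv_nonconst α ⟨i, hi⟩
  set w : Fin n → F := v - fun _ => α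
  have hw_mem : w ∈ C := C.sub_mem hv (by convert C.smul_mem α hone using 1; ext; simp)
  have hw_ne : w ≠ 0 := fun h => hv_nonconst α (sub_eq_zero.1 h)
  have hw_lt : hammingNorm w < n := by
    simpa using hammingNorm_lt_card_of_apply_eq_zero (x := w) (sub_eq_zero.2 hi)
  have hw_d : hammingNorm w = d := (hweights w hw_mem hw_ne).resolve_right hw_lt.ne
  have hsplit : #{i | v i = α} + hammingNorm w = n := by
    simpa using card_filter_eq_add_hammingNorm_sub_const v α
  rw [Nat.card_eq_fintype_card, Fintype.card_subtype]
  simp only [Set.mem_ofPred_eq]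
  omega

/-- Let `C` be a linear two-weight `[n, k, {d, n}]_q`-code containing the
all-one vector.  Then in every codeword `v` that is not a scalar multiple of
the all-one vector, every symbol `α` occurring in `v` occurs exactly `n - d`
times. -/
theorem two_weight_symbol_multiplicity
    {F : Type*} [Field F] [Fintype F] [DecidableEq F] {q n d : ℕ}
    (hq : Fintype.card F = q)
    (C : Submodule F (Fin n → F))
    (hweights : ∀ x ∈ C, x ≠ 0 → hammingNorm x = d ∨ hammingNorm x = n)
    (hd_att : ∃ x ∈ C, x ≠ 0 ∧ hammingNorm x = d)
    (hn_att : ∃ x ∈ C, x ≠ 0 ∧ hammingNorm x = n)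
    (hdn : d < n)
    (hone : (fun _ : Fin n => (1 : F)) ∈ C) :
    ∀ v ∈ C, (∀ l : F, v ≠ fun _ : Fin n => l) →
      ∀ α : F, (∃ i : Fin n, v i = α) →
        Nat.card {i : Fin n | v i = α} = n - d :=
  two_weight_symbol_multiplicity_general C hweights hone
end
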